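/- arXiv:0711.3852 — 6 statements merged into one kernel-verified Lean document; each statement's English description precedes it below -/
import Mathlib

section
/- Let X_1,...,X_n be cyclically exchangeable random variables with values in a space E, let f: E → {-1,0,1,2,...}, and suppose that almost surely the sum f(X_1)+...+f(X_n) = -k for some fixed integer 1 ≤ k ≤ n. Then the probability that n is the first index j with partial sum f(X_1)+...+f(X_j) = -k equals k/n. -/
set_option autoImplicit false

open MeasureTheory ProbabilityTheory Filter Finset

namespace BallotAux

/-- Partial sums of `y`. -/
def W (y : ℕ → ℤ) (j : ℕ) : ℤ := ∑ m ∈ Finset.range j, y m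

variable {n k : ℕ} {y : ℕ → ℤ}

lemma W_zero : W y 0 = 0 := by simp [W]

lemma W_add (a b : ℕ) : W y (a + b) = W y a + ∑ m ∈ Finset.range b, y (a + m) := by
  simp [W, Finset.sum_range_add]

/-- Hypotheses bundle as a structure for convenience. -/
structure Hyp (n k : ℕ) (y : ℕ → ℤ) : Prop where
  hk1 : 1 ≤ k
  hkn : k ≤ n
  hy1 : ∀ j, -1 ≤ y j
  hper : ∀ j, y (j + n) = y j
  hsum : W y n = -(k : ℤ)

namespace Hyp

variable (H : Hyp n k y)
include H

lemma hn0 : 0 < n := lt_of_lt_of_le H.hk1 H.hkn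

lemma W_per (j : ℕ) : W y (j + n) = W y j - k := by
  have : W y (n + j) = W y n + ∑ m ∈ Finset.range j, y (n + m) := W_add n j
  rw [Nat.add_comm j n, this, H.hsum]
  have : ∑ m ∈ Finset.range j, y (n + m) = ∑ m ∈ Finset.range j, y m :=
    Finset.sum_congr rfl fun m _ => by rw [Nat.add_comm n m]; exact H.hper m
  rw [this]; ring_nf; rfl

lemma W_per_mul (j t : ℕ) : W y (j + t * n) = W y j - t * k := by
  induction t with
  | zero => simp
  | succ t ih =>
      have : j + (t + 1) * n = (j + t * n) + n := by ring
      rw [this, H.W_per, ih]; push_cast; ring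

lemma W_ge (j : ℕ) : -(j : ℤ) ≤ W y j := by
  induction j with
  | zero => simp [W_zero]
  | succ j ih =>
      have : W y (j + 1) = W y j + y j := by simp [W, Finset.sum_range_succ]
      rw [this]; push_cast
      have := H.hy1 j
      omega

lemma exists_le (c : ℤ) (hc : c ≤ 0) : ∃ j, W y j ≤ c := by
  refine ⟨0 + c.natAbs * n, ?_⟩
  rw [H.W_per_mul 0 c.natAbs, W_zero]
  have h1 : (c.natAbs : ℤ) = -c := by omega
  have h2 : (c.natAbs : ℤ) * 1 ≤ (c.natAbs : ℤ) * k := by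
    apply mul_le_mul_of_nonneg_left _ (by positivity)
    exact_mod_cast H.hk1
  omega

end Hyp

/-- First hitting time of level `c` (weakly below). -/
noncomputable def tau (y : ℕ → ℤ) (c : ℤ) : ℕ := sInf {j | W y j ≤ c}

variable (H : Hyp n k y)

include H in
lemma tau_spec {c : ℤ} (hc : c ≤ 0) : W y (tau y c) ≤ c :=
  Nat.sInf_mem (H.exists_le c hc)

lemma lt_of_lt_tau {c : ℤ} {j : ℕ} (hj : j < tau y c) : c < W y j := by
  by_contra h
  exact Nat.notMem_of_lt_sInf hj (by simpa using not_lt.mp h)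

lemma tau_le {c : ℤ} {j : ℕ} (hj : W y j ≤ c) : tau y c ≤ j := Nat.sInf_le hj

include H in
lemma W_tau {c : ℤ} (hc : c ≤ 0) : W y (tau y c) = c := by
  rcases Nat.eq_zero_or_eq_succ_pred (tau y c) with h | h
  · have := tau_spec H hc
    rw [h] at this ⊢
    rw [W_zero] at this ⊢
    · omega
  · have h1 : tau y c - 1 < tau y c := by omega
    have h2 := lt_of_lt_tau h1
    have h3 := tau_spec H hc
    have h4 : W y (tau y c) = W y (tau y c - 1) + y (tau y c - 1) := by
      conv_lhs => rw [show tau y c = (tau y c - 1) + 1 by omega]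
      simp [W, Finset.sum_range_succ]
    have := H.hy1 (tau y c - 1)
    omega

include H in
lemma tau_pos {c : ℤ} (hc : c < 0) : 0 < tau y c := by
  rcases Nat.eq_zero_or_pos (tau y c) with h | h
  · exfalso; have := tau_spec H (le_of_lt hc); rw [h, W_zero] at this; omega
  · exact h

include H in
lemma natAbs_le_tau {c : ℤ} (hc : c ≤ 0) : c.natAbs ≤ tau y c := by
  have h1 := W_tau H hc
  have h2 := H.W_ge (tau y c)
  omega

include H in
lemma tau_antitone {c c' : ℤ} (h : c ≤ c') (hc : c ≤ 0) : tau y c' ≤ tau y c :=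
  tau_le (le_trans (tau_spec H hc) h)

/-- Strict ladder (running-minimum) times. -/
def Ladder (y : ℕ → ℤ) (m : ℕ) : Prop := ∀ j < m, W y m < W y j

include H in
lemma ladder_tau {c : ℤ} (hc : c ≤ 0) : Ladder y (tau y c) := fun j hj => by
  rw [W_tau H hc]; exact lt_of_lt_tau hj

lemma W_ladder_nonpos {m : ℕ} (hm : Ladder y m) : W y m ≤ 0 := by
  rcases Nat.eq_zero_or_pos m with h | h
  · rw [h, W_zero]
  · have := hm 0 h; rw [W_zero] at this; omega

lemma tau_of_ladder {m : ℕ} (hm : Ladder y m) : tau y (W y m) = m := by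
  have h1 : tau y (W y m) ≤ m := tau_le le_rfl
  rcases lt_or_eq_of_le h1 with h | h
  · exfalso
    have := hm _ h
    have h2 : W y m < W y (tau y (W y m)) := this
    have h3 : tau y (W y m) ∈ {j | W y j ≤ W y m} := Nat.sInf_mem ⟨m, show W y m ≤ W y m from le_rfl⟩
    have h3' : W y (tau y (W y m)) ≤ W y m := h3
    omega
  · exact h

include H in
lemma ladder_add (m : ℕ) (hnm : n ≤ m) (hm : Ladder y m) : Ladder y (m + n) := by
  intro j hj
  rw [H.W_per m]
  rcases lt_or_ge j m with h | h
  · have := hm j h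
    have hk : (0 : ℤ) < k := by exact_mod_cast H.hk1
    omega
  · -- m ≤ j < m + n, j ≥ m ≥ n
    have hjn : n ≤ j := le_trans hnm h
    have hje : j = (j - n) + n := by omega
    rw [hje, H.W_per (j - n)]
    have : j - n < m := by omega
    have := hm _ this
    omega

include H in
lemma ladder_sub (m : ℕ) (hm : Ladder y (m + n)) : Ladder y m := by
  intro j hj
  have h1 := hm (j + n) (by omega)
  rw [H.W_per j, H.W_per m] at h1
  omega

include H in
lemma tau_shift {c : ℤ} (hc : c ≤ 0) (h : n ≤ tau y c) :
    tau y (c - k) = tau y c + n := by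
  have hl : Ladder y (tau y c + n) := ladder_add H _ h (ladder_tau H hc)
  have := tau_of_ladder hl
  rwa [H.W_per, W_tau H hc] at this

include H in
lemma tau_unshift {c : ℤ} (hc : c ≤ 0) (h : 2 * n ≤ tau y c) :
    c + k ≤ 0 ∧ n ≤ tau y (c + k) ∧ tau y (c + k) = tau y c - n := by
  set m := tau y c with hm
  have hme : m = (m - n) + n := by have := H.hn0; omega
  have hl : Ladder y ((m - n) + n) := by rw [← hme]; exact ladder_tau H hc
  have hl2 : Ladder y (m - n) := ladder_sub H _ hl
  have hW : W y (m - n) = c + k := by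
    have := H.W_per (m - n)
    rw [← hme, W_tau H hc] at this
    omega
  have hpos : 0 < m - n := by have := H.hn0; omega
  have hc2 : c + k ≤ 0 := by
    have h0 := hl2 0 hpos
    rw [W_zero, hW] at h0
    omega
  have := tau_of_ladder hl2
  rw [hW] at this
  refine ⟨hc2, by omega, by omega⟩

/-- A shift `i` is good if all proper partial sums of the shifted sequence stay above `-k`. -/
def Good (k : ℕ) (y : ℕ → ℤ) (i : ℕ) : Prop :=
  ∀ j < n, -(k : ℤ) < ∑ m ∈ Finset.range j, y (i + m)

instance : DecidablePred (Good (n := n) k y) := fun i => by unfold Good; infer_instance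

include H in
lemma good_iff_ladder (i : ℕ) : Good (n := n) k y i ↔ Ladder y (i + n) := by
  have hWn : W y (i + n) = W y i - k := H.W_per i
  have key : Good (n := n) k y i ↔ ∀ j < n, W y (i + n) < W y (i + j) := by
    constructor
    · intro hg j hj
      have := hg j hj
      rw [W_add i j] at *
      omega
    · intro hg j hj
      have := hg j hj
      have hWj : W y (i + j) = W y i + ∑ m ∈ Finset.range j, y (i + m) := W_add i j
      omega
  rw [key]
  constructor
  · intro hg j hj
    -- j < i + n; bring j into the window [i, i+n) by adding multiples of n
    have hn0 := H.hn0
    set s := i + n - 1 - j with hs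
    set t := s / n with ht
    have hdm : t * n + s % n = s := by rw [ht, Nat.mul_comm]; exact Nat.div_add_mod s n
    have hrn : s % n < n := Nat.mod_lt _ hn0
    have hjt : i ≤ j + t * n ∧ j + t * n < i + n := by
      constructor <;> omega
    have hWjt : W y (j + t * n) = W y j - t * k := H.W_per_mul j t
    rcases eq_or_lt_of_le hjt.1 with h | h
    · -- j + t*n = i
      have hk : (0:ℤ) < k := by exact_mod_cast H.hk1
      have ht0 : (0:ℤ) ≤ (t:ℤ) * k := by positivity
      rw [← h] at hWjt
      omega
    · -- i < j + t*n < i + n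
      have hj' : j + t * n = i + (j + t * n - i) := by omega
      have hlt : j + t * n - i < n := by omega
      have := hg (j + t * n - i) hlt
      rw [← hj'] at this
      have ht0 : (0:ℤ) ≤ (t:ℤ) * k := by positivity
      omega
  · intro hl j hj
    exact hl (i + j) (by omega)

include H in
lemma card_good : ((Finset.range n).filter (fun i => Good (n := n) k y i)).card = k := by
  classical
  have hn0 := H.hn0
  -- greatest c with c ≤ 0 and n ≤ tau y c
  obtain ⟨c0, ⟨hc0le, hc0tau⟩, hc0max⟩ :=
    Int.exists_greatest_of_bdd (P := fun c => c ≤ 0 ∧ n ≤ tau y c)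
      ⟨0, fun z hz => hz.1⟩
      ⟨-(n : ℤ), by
        refine ⟨by omega, ?_⟩
        have := natAbs_le_tau H (c := -(n:ℤ)) (by omega)
        omega⟩
  -- characterization
  have char : ∀ c : ℤ, (c ≤ 0 ∧ n ≤ tau y c ∧ tau y c < 2 * n) ↔ (c0 - k < c ∧ c ≤ c0) := by
    intro c
    constructor
    · rintro ⟨hc, h1, h2⟩
      refine ⟨?_, hc0max c ⟨hc, h1⟩⟩
      by_contra h
      push_neg at h
      have := tau_shift H hc0le hc0tau
      have hmono := tau_antitone H (c := c) (c' := c0 - k) (by omega) hc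
      omega
    · rintro ⟨h1, h2⟩
      have hc : c ≤ 0 := le_trans h2 hc0le
      have hge : n ≤ tau y c := le_trans hc0tau (tau_antitone H h2 hc)
      refine ⟨hc, hge, ?_⟩
      by_contra h
      push_neg at h
      obtain ⟨hck, hck2, _⟩ := tau_unshift H hc h
      have := hc0max (c + k) ⟨hck, hck2⟩
      omega
  -- bijection between good shifts and Ioc (c0 - k) c0
  have hcard : ((Finset.range n).filter (fun i => Good (n := n) k y i)).card
      = (Finset.Ioc (c0 - k) c0).card := by
    apply Finset.card_bij' (fun i _ => W y (i + n)) (fun c _ => tau y c - n)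
    · intro i hi
      simp only [Finset.mem_filter, Finset.mem_range] at hi
      have hl : Ladder y (i + n) := (good_iff_ladder H i).mp hi.2
      have htau : tau y (W y (i + n)) = i + n := tau_of_ladder hl
      have hWle : W y (i + n) ≤ 0 := W_ladder_nonpos hl
      have := (char (W y (i + n))).mp ⟨hWle, by omega, by omega⟩
      simpa [Finset.mem_Ioc] using this
    · intro c hc
      simp only [Finset.mem_Ioc] at hc
      obtain ⟨hcle, h1, h2⟩ := (char c).mpr hc
      simp only [Finset.mem_filter, Finset.mem_range]
      constructor
      · omega
      · rw [good_iff_ladder H]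
        have : tau y c - n + n = tau y c := by omega
        rw [this]
        exact ladder_tau H hcle
    · intro i hi
      simp only [Finset.mem_filter, Finset.mem_range] at hi
      have hl : Ladder y (i + n) := (good_iff_ladder H i).mp hi.2
      rw [tau_of_ladder hl]
      omega
    · intro c hc
      simp only [Finset.mem_Ioc] at hc
      obtain ⟨hcle, h1, h2⟩ := (char c).mpr hc
      have : tau y c - n + n = tau y c := by omega
      rw [this]
      exact W_tau H hcle
  rw [hcard, Int.card_Ioc]
  omega

end BallotAux

/-- **Ballot theorem** (cyclic exchangeability version).
If `X 0, ..., X (n-1)` is a cyclically exchangeable sequence with values in `E`,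
`f : E → ℤ` takes values in `{-1, 0, 1, 2, ...}`, and almost surely
`f (X 0) + ... + f (X (n-1)) = -k` for some `1 ≤ k ≤ n`, then the probability that
`n` is the first index `j ≥ 1` such that `f (X 0) + ... + f (X (j-1)) = -k` equals `k / n`. -/
theorem ballot_theorem
    {Ω : Type*} [MeasureSpace Ω] (P : Measure Ω := volume) [IsProbabilityMeasure P]
    {E : Type*} [MeasurableSpace E]
    (n k : ℕ) (hk1 : 1 ≤ k) (hkn : k ≤ n)
    (X : ℕ → Ω → E) (hX : ∀ i, Measurable (X i))
    (f : E → ℤ) (hf : Measurable f) (hf1 : ∀ x, -1 ≤ f x)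
    (hcyc : ∀ i : ℕ,
      Measure.map (fun ω => fun j : Fin n => X ((j + i) % n) ω) P
        = Measure.map (fun ω => fun j : Fin n => X j ω) P)
    (hsum : ∀ᵐ ω ∂P, (∑ j ∈ Finset.range n, f (X j ω)) = -(k : ℤ)) :
    P {ω | sInf {j : ℕ | 1 ≤ j ∧ (∑ i ∈ Finset.range j, f (X i ω)) = -(k : ℤ)} = n}
      = (k : ENNReal) / n := by
  classical
  have hn0 : 0 < n := lt_of_lt_of_le hk1 hkn
  -- the (periodized) increments
  set y : Ω → ℕ → ℤ := fun ω j => f (X (j % n) ω) with hy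
  -- the good-shift events
  set B : ℕ → Set Ω := fun i => {ω | BallotAux.Good (n := n) k (y ω) i} with hB
  -- a.e. hypotheses bundle
  have hHyp : ∀ ω, (∑ j ∈ Finset.range n, f (X j ω)) = -(k : ℤ) →
      BallotAux.Hyp n k (y ω) := by
    intro ω hω
    refine ⟨hk1, hkn, fun j => hf1 _, fun j => by simp [hy, Nat.add_mod_right], ?_⟩
    have : ∀ j ∈ Finset.range n, y ω j = f (X j ω) := fun j hj => by
      simp only [hy]
      rw [Nat.mod_eq_of_lt (Finset.mem_range.mp hj)]
    rw [BallotAux.W, Finset.sum_congr rfl this, hω]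
  -- the target set in (Fin n → E)
  set A : Set (Fin n → E) :=
    {v | ∀ j < n, -(k : ℤ) < ∑ m ∈ Finset.range j, f (v ⟨m % n, Nat.mod_lt _ hn0⟩)} with hA
  have hAmeas : MeasurableSet A := by
    have : A = ⋂ (j : ℕ) (_ : j < n),
        {v : Fin n → E | -(k : ℤ) < ∑ m ∈ Finset.range j, f (v ⟨m % n, Nat.mod_lt _ hn0⟩)} := by
      ext v; simp [hA]
    rw [this]
    refine MeasurableSet.iInter fun j => MeasurableSet.iInter fun _ => ?_
    have hg : Measurable fun v : Fin n → E =>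
        ∑ m ∈ Finset.range j, f (v ⟨m % n, Nat.mod_lt _ hn0⟩) :=
      Finset.measurable_sum _ fun m _ => hf.comp (measurable_pi_apply _)
    exact measurableSet_lt measurable_const hg
  -- preimage identification
  have hpre : ∀ i : ℕ, (fun ω => fun j : Fin n => X ((j + i) % n) ω) ⁻¹' A = B i := by
    intro i
    ext ω
    simp only [Set.mem_preimage, hA, Set.mem_setOf_eq, hB, BallotAux.Good, hy]
    have heq : ∀ j : ℕ, (∑ m ∈ Finset.range j, f (X ((m % n + i) % n) ω))
        = ∑ m ∈ Finset.range j, f (X ((i + m) % n) ω) :=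
      fun j => Finset.sum_congr rfl fun m _ => by rw [Nat.mod_add_mod, Nat.add_comm]
    constructor <;> intro h j hj <;> have h' := h j hj <;> have h2 := heq j <;> omega
  have hpre0 : (fun ω => fun j : Fin n => X j ω) ⁻¹' A = B 0 := by
    ext ω
    simp only [Set.mem_preimage, hA, Set.mem_setOf_eq, hB, BallotAux.Good, hy]
    have heq : ∀ j : ℕ, (∑ m ∈ Finset.range j, f (X (m % n) ω))
        = ∑ m ∈ Finset.range j, f (X ((0 + m) % n) ω) :=
      fun j => Finset.sum_congr rfl fun m _ => by rw [Nat.zero_add]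
    constructor <;> intro h j hj <;> have h' := h j hj <;> have h2 := heq j <;> omega
  -- measurability of the events
  have hmapmeas : ∀ i : ℕ, Measurable (fun ω => fun j : Fin n => X ((j + i) % n) ω) :=
    fun i => measurable_pi_lambda _ fun j => hX _
  have hmap0 : Measurable (fun ω => fun j : Fin n => X j ω) :=
    measurable_pi_lambda _ fun j => hX _
  have hBmeas : ∀ i : ℕ, MeasurableSet (B i) := fun i => by
    rw [← hpre i]; exact (hmapmeas i) hAmeas
  -- all events have the same probability
  have hPB : ∀ i : ℕ, P (B i) = P (B 0) := by
    intro i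
    rw [← hpre i, ← hpre0]
    rw [← Measure.map_apply (hmapmeas i) hAmeas, ← Measure.map_apply hmap0 hAmeas, hcyc i]
  -- the sum of the probabilities equals k
  have hsumP : ∑ i ∈ Finset.range n, P (B i) = (k : ENNReal) := by
    have h1 : ∀ i ∈ Finset.range n, P (B i) = ∫⁻ ω, (B i).indicator 1 ω ∂P :=
      fun i _ => (lintegral_indicator_one (hBmeas i)).symm
    rw [Finset.sum_congr rfl h1,
      ← lintegral_finset_sum _ (fun i _ => (measurable_one.indicator (hBmeas i)))]
    have h2 : ∀ᵐ ω ∂P, (∑ i ∈ Finset.range n, (B i).indicator 1 ω) = (k : ENNReal) := by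
      filter_upwards [hsum] with ω hω
      have H := hHyp ω hω
      have hcount := BallotAux.card_good H
      have h3 : ∀ i ∈ Finset.range n,
          (B i).indicator (1 : Ω → ENNReal) ω
            = if BallotAux.Good (n := n) k (y ω) i then 1 else 0 := by
        intro i _
        by_cases hgi : BallotAux.Good (n := n) k (y ω) i <;>
          simp [Set.indicator_apply, hB, hgi]
      rw [Finset.sum_congr rfl h3, Finset.sum_boole, hcount]
    rw [lintegral_congr_ae h2, lintegral_const, measure_univ, mul_one]
  -- hence P (B 0) = k / n
  have hPB0 : P (B 0) = (k : ENNReal) / n := by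
    rw [ENNReal.eq_div_iff (by exact_mod_cast hn0.ne') (by simp)]
    calc (n : ENNReal) * P (B 0) = ∑ i ∈ Finset.range n, P (B i) := by
          rw [Finset.sum_congr rfl (fun i _ => hPB i), Finset.sum_const, Finset.card_range,
            nsmul_eq_mul]
      _ = k := hsumP
  -- identify the target event with B 0, almost everywhere
  have hae : {ω | sInf {j : ℕ | 1 ≤ j ∧ (∑ i ∈ Finset.range j, f (X i ω)) = -(k : ℤ)} = n}
      =ᵐ[P] B 0 := by
    rw [Filter.eventuallyEq_set]
    filter_upwards [hsum] with ω hω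
    have H := hHyp ω hω
    set S : ℕ → ℤ := fun j => ∑ i ∈ Finset.range j, f (X i ω) with hS
    have hSW : ∀ j ≤ n, BallotAux.W (y ω) j = S j := by
      intro j hj
      refine Finset.sum_congr rfl fun m hm => ?_
      simp only [hy]
      rw [Nat.mod_eq_of_lt (by have := Finset.mem_range.mp hm; omega)]
    have hB0 : BallotAux.Good (n := n) k (y ω) 0 ↔ ∀ j < n, -(k : ℤ) < S j := by
      simp only [BallotAux.Good]
      have heq : ∀ j, j < n → (∑ m ∈ Finset.range j, y ω (0 + m)) = S j := by
        intro j hj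
        refine Finset.sum_congr rfl fun m hm => ?_
        have hm' : m < n := by have := Finset.mem_range.mp hm; omega
        simp only [hy, Nat.zero_add]
        rw [Nat.mod_eq_of_lt hm']
      constructor <;> intro h j hj <;> have h' := h j hj <;> have h2 := heq j hj <;> omega
    have hnmem : n ∈ {j : ℕ | 1 ≤ j ∧ S j = -(k : ℤ)} := ⟨by omega, hω⟩
    show sInf {j : ℕ | 1 ≤ j ∧ S j = -(k : ℤ)} = n ↔ BallotAux.Good (n := n) k (y ω) 0
    rw [hB0]
    constructor
    · intro hinf j hj
      by_contra hle
      push_neg at hle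
      -- S j ≤ -k with j < n; find first hitting time
      have hWj : BallotAux.W (y ω) j ≤ -(k : ℤ) := by rw [hSW j (le_of_lt hj)]; exact hle
      set j0 := BallotAux.tau (y ω) (-(k : ℤ)) with hj0
      have hj0le : j0 ≤ j := BallotAux.tau_le hWj
      have hj0pos : 0 < j0 := BallotAux.tau_pos H (by omega)
      have hWj0 : BallotAux.W (y ω) j0 = -(k : ℤ) := BallotAux.W_tau H (by omega)
      have hj0mem : j0 ∈ {j : ℕ | 1 ≤ j ∧ S j = -(k : ℤ)} :=
        ⟨hj0pos, by rw [← hSW j0 (by omega)]; exact hWj0⟩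
      have := Nat.sInf_le hj0mem
      omega
    · intro hgt
      have hle : sInf {j : ℕ | 1 ≤ j ∧ S j = -(k : ℤ)} ≤ n := Nat.sInf_le hnmem
      have hmem := Nat.sInf_mem (⟨n, hnmem⟩ :
        Set.Nonempty {j : ℕ | 1 ≤ j ∧ S j = -(k : ℤ)})
      rcases lt_or_eq_of_le hle with h | h
      · exfalso
        have := hgt _ h
        have := hmem.2
        omega
      · exact h
  rw [measure_congr hae, hPB0]
end

section
/- Let (ξ_i)_{i≥1} be i.i.d. random variables with values in ℤ_+ and mean at most 1, and define the downward skip-free random walk S_n = ξ_1 + ... + ξ_n − n and the first passage time T_1 = inf{n ≥ 0 : S_n = −1}. Then for every n ≥ 1, P(T_1 = n) = (1/n) · P(ξ_1 + ... + ξ_n = n − 1). -/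
/-!
Let `B` be the event that the first `n` steps `ξ i - 1` sum to `-1` and `A` the event that the
walk first hits `-1` at time `n`. By the cycle lemma, exactly one of the `n` cyclic rotations of a
path in `B` lies in `A` (the one starting at the first minimum of the partial sums; skip-freeness
makes "stays `≥ 0` before time `n`" the same as "avoids `-1` before time `n`"), and no rotation of
a path outside `B` does. The law of `(ξ 0, …, ξ (n-1))` is a product measure, hence invariant under
rotations, so `P(B) = n • P(A)`.
-/

open MeasureTheory ProbabilityTheory Finset

theorem Function.Periodic.sum_range_add {a : ℕ → ℤ} {n : ℕ} (hper : Function.Periodic a n)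
    (m : ℕ) : ∑ j ∈ range n, a (m + j) = ∑ j ∈ range n, a j := by
  induction m with
  | zero => simp
  | succ m ih =>
    have hshift := sum_range_succ' (fun j => a (m + j)) n
    rw [sum_range_succ, ih, add_zero, hper m] at hshift
    simp only [← add_assoc, add_right_comm m _ 1] at hshift
    linarith

theorem existsUnique_first_argmin (f : ℕ → ℤ) {n : ℕ} (hn : 0 < n) :
    ∃! k, k < n ∧ (∀ j < n, f k ≤ f j) ∧ ∀ j < k, f k < f j := by
  classical
  have hmin : ∃ k, k < n ∧ ∀ j < n, f k ≤ f j := by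
    obtain ⟨k, hk, hle⟩ := exists_min_image (range n) f ⟨0, mem_range.2 hn⟩
    exact ⟨k, mem_range.1 hk, fun j hj => hle j (mem_range.2 hj)⟩
  obtain ⟨hkn, hkle⟩ := Nat.find_spec hmin
  refine ⟨Nat.find hmin, ⟨hkn, hkle, fun j hj => ?_⟩, ?_⟩
  · by_contra! hjk
    exact Nat.find_min hmin hj ⟨hj.trans hkn, fun i hi => hjk.trans (hkle i hi)⟩
  · rintro k ⟨hk, hkle', hklt⟩
    refine le_antisymm ?_ (Nat.find_min' hmin ⟨hk, hkle'⟩)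
    by_contra! hlt
    exact (hklt _ hlt).not_ge (hkle k hk)

theorem existsUnique_rotation_sum_range_nonneg {a : ℕ → ℤ} {n : ℕ} (hn : 0 < n)
    (hper : Function.Periodic a n) (hsum : ∑ j ∈ range n, a j = -1) :
    ∃! k, k < n ∧ ∀ m < n, 0 ≤ ∑ j ∈ range m, a (k + j) := by
  set S : ℕ → ℤ := fun m => ∑ j ∈ range m, a j
  have hshift (k m : ℕ) : ∑ j ∈ range m, a (k + j) = S (k + m) - S k := by
    simp only [S, sum_range_add]; ring
  have hdrop (m : ℕ) : S (m + n) = S m - 1 := by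
    simp only [S, sum_range_add, hper.sum_range_add, hsum]; ring
  refine (existsUnique_congr fun k => and_congr_right fun hk => ?_).1
    (existsUnique_first_argmin S hn)
  simp only [hshift, sub_nonneg]
  constructor
  · rintro ⟨hle, hlt⟩ m hm
    rcases lt_or_ge (k + m) n with hkm | hkm
    · exact hle _ hkm
    · have hwrap := hlt (k + m - n) (by omega)
      rw [show k + m = k + m - n + n by omega, hdrop]
      omega
  · intro h
    have hwrap (j : ℕ) (hj : j < k) : S k < S j := by
      have := h (j + n - k) (by omega)
      rw [show k + (j + n - k) = j + n by omega, hdrop] at this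
      omega
    refine ⟨fun j hj => ?_, hwrap⟩
    rcases lt_or_ge j k with hjk | hjk
    · exact (hwrap j hjk).le
    · simpa [Nat.add_sub_cancel' hjk] using h (j - k) (by omega)

theorem sum_range_nonneg_of_forall_ne_neg_one {b : ℕ → ℤ} (hb : ∀ j, -1 ≤ b j) {n : ℕ}
    (h : ∀ m ≤ n, ∑ j ∈ range m, b j ≠ -1) : 0 ≤ ∑ j ∈ range n, b j := by
  induction n with
  | zero => simp
  | succ n ih =>
    have hprev := ih fun m hm => h m (by omega)
    have := h (n + 1) le_rfl
    rw [sum_range_succ] at this ⊢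
    have := hb n
    omega

theorem Nat.sInf_eq_iff_of_ne_zero {s : Set ℕ} {n : ℕ} (hn : n ≠ 0) :
    sInf s = n ↔ n ∈ s ∧ ∀ m < n, m ∉ s := by
  constructor
  · rintro rfl
    exact ⟨Nat.sInf_mem (Nat.nonempty_of_pos_sInf (Nat.pos_of_ne_zero hn)),
      fun m hm => Nat.notMem_of_lt_sInf hm⟩
  · rintro ⟨hns, hlt⟩
    exact (csInf_eq_iff ⟨n, hns⟩ n).2 ⟨hns, fun m hm => not_lt.1 fun h => hlt m h hm⟩

section CyclicWalk

variable {n : ℕ}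

/-- The path is indexed by `ZMod n` so that its cyclic rotations are `fun i => x (i + k)`; the walk
reads it periodically and, for `m ≤ n`, is the walk of the first `n` steps. -/
def walk (x : ZMod n → ℕ) (m : ℕ) : ℤ := ∑ j ∈ range m, ((x j : ℤ) - 1)

def firstPassage (n : ℕ) : Set (ZMod n → ℕ) :=
  {x | walk x n = -1 ∧ ∀ m < n, walk x m ≠ -1}

theorem walk_comp_val (x : ℕ → ℕ) {m : ℕ} (hm : m ≤ n) :
    walk (fun i : ZMod n => x i.val) m = ∑ i ∈ range m, (x i : ℤ) - m := by
  rw [walk, sum_sub_distrib, sum_const, card_range, nsmul_one]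
  congr 1
  refine sum_congr rfl fun i hi => ?_
  rw [ZMod.val_cast_of_lt ((mem_range.1 hi).trans_le hm)]

theorem indicator_walk_eq_sum_rotate [NeZero n] (x : ZMod n → ℕ) :
    {y : ZMod n → ℕ | walk y n = -1}.indicator (1 : (ZMod n → ℕ) → ENNReal) x
      = ∑ k : ZMod n, (firstPassage n).indicator 1 (fun i => x (i + k)) := by
  set a : ℕ → ℤ := fun j => (x j : ℤ) - 1
  have hper : Function.Periodic a n := fun j => by simp [a]
  have hrot (k : ZMod n) (m : ℕ) :
      walk (fun i => x (i + k)) m = ∑ j ∈ range m, a (k.val + j) := by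
    refine sum_congr rfl fun j _ => ?_
    simp [a, add_comm]
  have hfull (k : ZMod n) : walk (fun i => x (i + k)) n = walk x n := by
    rw [hrot, hper.sum_range_add]; rfl
  by_cases hx : walk x n = -1
  · have hmem (k : ZMod n) :
        (fun i => x (i + k)) ∈ firstPassage n ↔ ∀ m < n, 0 ≤ ∑ j ∈ range m, a (k.val + j) := by
      simp only [firstPassage, Set.mem_ofPred_eq, hfull, hx, true_and, hrot]
      refine ⟨fun h m hm => sum_range_nonneg_of_forall_ne_neg_one (fun j => ?_)
        fun m' hm' => h m' (by omega), fun h m hm => by have := h m hm; omega⟩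
      simp only [a]
      omega
    obtain ⟨k₀, ⟨hk₀, hgood⟩, huniq⟩ :=
      existsUnique_rotation_sum_range_nonneg (NeZero.pos n) hper hx
    rw [Set.indicator_of_mem (show x ∈ {y | walk y n = -1} from hx),
      sum_eq_single (k₀ : ZMod n), Set.indicator_of_mem]
    · rfl
    · rwa [hmem, ZMod.val_cast_of_lt hk₀]
    · intro k _ hk
      refine Set.indicator_of_notMem (fun hkA => hk ?_) _
      rw [← huniq k.val ⟨ZMod.val_lt k, (hmem k).1 hkA⟩, ZMod.natCast_zmod_val]
    · simp
  · rw [Set.indicator_of_notMem (show x ∉ {y | walk y n = -1} from hx)]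
    refine (sum_eq_zero fun k _ => Set.indicator_of_notMem (fun hkA => hx ?_) _).symm
    rw [← hfull k]
    exact hkA.1

end CyclicWalk

theorem measure_eq_card_mul_of_indicator_eq_sum {ι α : Type*} [Fintype ι] [MeasurableSpace α]
    {μ : Measure α} {g : ι → α → α} (hg : ∀ i, MeasurePreserving (g i) μ μ) {A B : Set α}
    (hA : MeasurableSet A) (hB : MeasurableSet B)
    (h : ∀ x, B.indicator (1 : α → ENNReal) x = ∑ i, A.indicator 1 (g i x)) :
    μ B = Fintype.card ι * μ A := by
  have hAind : Measurable (A.indicator (1 : α → ENNReal)) := measurable_one.indicator hA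
  calc μ B = ∫⁻ x, B.indicator 1 x ∂μ := (lintegral_indicator_one hB).symm
    _ = ∑ i, ∫⁻ x, A.indicator 1 (g i x) ∂μ := by
      simp_rw [h]
      exact lintegral_finsetSum _ fun i _ => hAind.comp (hg i).measurable
    _ = ∑ _i : ι, μ A := by
      refine sum_congr rfl fun i _ => ?_
      rw [(hg i).lintegral_comp hAind, lintegral_indicator_one hA]
    _ = Fintype.card ι * μ A := by simp

theorem MeasureTheory.measurePreserving_pi_comp_perm {ι α : Type*} [Fintype ι] [MeasurableSpace α]
    (ν : Measure α) [SigmaFinite ν] (σ : Equiv.Perm ι) :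
    MeasurePreserving (fun (x : ι → α) i => x (σ i)) (Measure.pi fun _ => ν)
      (Measure.pi fun _ => ν) := by
  convert measurePreserving_piCongrLeft (fun _ : ι => ν) σ.symm
  simpa using (MeasurableEquiv.piCongrLeft_apply_apply (β := fun _ => α) σ.symm _ (σ _)).symm

theorem ProbabilityTheory.iIndepFun.map_eq_pi_of_identDistrib {Ω ι β : Type*}
    [MeasurableSpace Ω] [Fintype ι] [MeasurableSpace β] {P : Measure Ω} {X : ι → Ω → β}
    (hind : iIndepFun X P) {Y : Ω → β} (hid : ∀ i, IdentDistrib (X i) Y P P) :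
    P.map (fun ω i => X i ω) = Measure.pi fun _ => P.map Y := by
  rw [hind.map_fun_eq_pi_map fun i => (hid i).aemeasurable_fst]
  simp_rw [(hid _).map_eq]

theorem dwass_formula_general
    {Ω : Type*} [MeasureSpace Ω] (P : Measure Ω := volume) [IsProbabilityMeasure P]
    (ξ : ℕ → Ω → ℕ)
    (hindep : iIndepFun ξ P)
    (hident : ∀ i, IdentDistrib (ξ i) (ξ 0) P P)
    (n : ℕ) (hn : 1 ≤ n) :
    P {ω | sInf {m : ℕ | (∑ i ∈ Finset.range m, (ξ i ω : ℤ)) - m = -1} = n}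
      = (n : ENNReal)⁻¹ * P {ω | (∑ i ∈ Finset.range n, ξ i ω) = n - 1} := by
  have : NeZero n := ⟨by omega⟩
  set V : Ω → (ZMod n → ℕ) := fun ω i => ξ i.val ω
  have hV : AEMeasurable V P := aemeasurable_pi_lambda _ fun i => (hident i.val).aemeasurable_fst
  have hlaw : P.map V = Measure.pi fun _ => P.map (ξ 0) :=
    (hindep.precomp (ZMod.val_injective n)).map_eq_pi_of_identDistrib fun i => hident i.val
  have hrot (k : ZMod n) : MeasurePreserving (fun x i => x (i + k)) (P.map V) (P.map V) := by
    rw [hlaw]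
    exact measurePreserving_pi_comp_perm _ (Equiv.addRight k)
  have hA : {ω | sInf {m : ℕ | (∑ i ∈ range m, (ξ i ω : ℤ)) - m = -1} = n}
      = V ⁻¹' firstPassage n := by
    ext ω
    simp only [Set.mem_ofPred_eq, Set.mem_preimage, firstPassage, V,
      Nat.sInf_eq_iff_of_ne_zero (NeZero.ne n), walk_comp_val (fun i => ξ i ω) le_rfl]
    exact and_congr_right' (forall₂_congr fun m hm => by
      rw [walk_comp_val (fun i => ξ i ω) hm.le])
  have hB : {ω | (∑ i ∈ range n, ξ i ω) = n - 1} = V ⁻¹' {x | walk x n = -1} := by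
    ext ω
    simp only [Set.mem_ofPred_eq, Set.mem_preimage, V, walk_comp_val (fun i => ξ i ω) le_rfl,
      ← Nat.cast_sum]
    omega
  rw [hA, hB, ← Measure.map_apply_of_aemeasurable hV (Set.to_countable _).measurableSet,
    ← Measure.map_apply_of_aemeasurable hV (Set.to_countable _).measurableSet,
    measure_eq_card_mul_of_indicator_eq_sum hrot (Set.to_countable _).measurableSet
      (Set.to_countable _).measurableSet indicator_walk_eq_sum_rotate, ZMod.card, ← mul_assoc,
    ENNReal.inv_mul_cancel (NeZero.ne _) (ENNReal.natCast_ne_top n), one_mul]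

/-- **Dwass's formula.** If `(ξ i)` are i.i.d. `ℕ`-valued random variables with mean at most `1`,
`S m = ξ 0 + ... + ξ (m-1) - m` and `T = inf {m : S m = -1}`, then for every `n ≥ 1`,
`P(T = n) = (1/n) ⬝ P(ξ 0 + ... + ξ (n-1) = n - 1)`. -/
theorem dwass_formula
    {Ω : Type*} [MeasureSpace Ω] (P : Measure Ω := volume) [IsProbabilityMeasure P]
    (ξ : ℕ → Ω → ℕ) (hmeas : ∀ i, Measurable (ξ i))
    (hindep : iIndepFun ξ P)
    (hident : ∀ i, IdentDistrib (ξ i) (ξ 0) P P)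
    (hint : Integrable (fun ω => (ξ 0 ω : ℝ)) P)
    (hmean : (∫ ω, (ξ 0 ω : ℝ) ∂P) ≤ 1)
    (n : ℕ) (hn : 1 ≤ n) :
    P {ω | sInf {m : ℕ | (∑ i ∈ Finset.range m, (ξ i ω : ℤ)) - m = -1} = n}
      = (n : ENNReal)⁻¹ * P {ω | (∑ i ∈ Finset.range n, ξ i ω) = n - 1} :=
  dwass_formula_general P ξ hindep hident n hn
end

section
/- Let ξ = (ξ^c, ξ^m) be a pair of ℤ_+-valued random variables with E(ξ^c + ξ^m) ≤ 1, and let (ξ^c_i, ξ^m_i) be i.i.d. copies. Let π^{*n}_{k,ℓ} = P(ξ^c_1+...+ξ^c_n = k, ξ^m_1+...+ξ^m_n = ℓ). Define Σ_j = Σ_{i≤j}(ξ^c_i + ξ^m_i) and let T = min{j ≥ 1 : Σ_j = j − 1} and A = 1 + ξ^m_1 + ... + ξ^m_T. Then for all 1 ≤ k ≤ n, P(T = n, A = k) = (1/n) · π^{*n}_{n−k, k−1}. -/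
/-! Cycle lemma. If the first `n` offspring pairs have clone total `n - k` and mutant total
`k - 1`, the steps `ξᶜ + ξᵐ - 1` sum to `-1`, and exactly one of the `n` cyclic shifts of the
steps (the one starting right after the first minimum of the partial sums) keeps the walk
nonnegative before time `n`. Since the walk is skip-free, that is the event `T = n`, on which
`A = k`. By exchangeability all `n` shifts are equally likely, so the convolution event has
`n` times the probability of `{T = n, A = k}`. -/

set_option autoImplicit false

open MeasureTheory ProbabilityTheory Finset

namespace GaltonWatson

/-- The rotation `i ↦ (i + r) % n` of `{0, …, n - 1}`, extended by the identity so that it is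
injective on all of `ℕ` and can reindex an i.i.d. sequence. -/
def cyclicShift (n r i : ℕ) : ℕ := if i < n then (i + r) % n else i

lemma cyclicShift_of_lt {n r i : ℕ} (h : i < n) : cyclicShift n r i = (i + r) % n := if_pos h

lemma cyclicShift_injective (n r : ℕ) : Function.Injective (cyclicShift n r) := by
  intro i j hij
  unfold cyclicShift at hij
  split_ifs at hij with hi hj hj
  · have h := Nat.ModEq.add_right_cancel' r hij
    rwa [Nat.ModEq, Nat.mod_eq_of_lt hi, Nat.mod_eq_of_lt hj] at h
  · exact absurd (hij ▸ Nat.mod_lt _ (by omega)) hj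
  · exact absurd (hij ▸ Nat.mod_lt _ (by omega)) hi
  · exact hij

lemma image_cyclicShift_range (n r : ℕ) : (range n).image (cyclicShift n r) = range n := by
  refine eq_of_subset_of_card_le (fun i hi => ?_)
    (card_image_of_injective _ (cyclicShift_injective n r)).ge
  obtain ⟨j, hj, rfl⟩ := mem_image.mp hi
  rw [mem_range] at hj ⊢
  rw [cyclicShift_of_lt hj]
  exact Nat.mod_lt _ (by omega)

lemma sum_range_comp_cyclicShift {M : Type*} [AddCommMonoid M] (f : ℕ → M) (n r : ℕ) :
    ∑ i ∈ range n, f (cyclicShift n r i) = ∑ i ∈ range n, f i := by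
  rw [← sum_image fun i _ j _ h => cyclicShift_injective n r h, image_cyclicShift_range]

section PartialSums

variable {G : Type*} [AddCommGroup G] (x : ℕ → G) {n r j : ℕ}

lemma sum_range_comp_cyclicShift_of_add_le (h : r + j ≤ n) :
    ∑ i ∈ range j, x (cyclicShift n r i) = ∑ i ∈ range (r + j), x i - ∑ i ∈ range r, x i := by
  rw [sum_range_add_sub_sum_range]
  refine sum_congr rfl fun i hi => ?_
  rw [mem_range] at hi
  rw [cyclicShift_of_lt (by omega), Nat.mod_eq_of_lt (by omega), add_comm]

lemma sum_range_comp_cyclicShift_of_le_add (hr : r < n) (hj : j ≤ n) (h : n ≤ r + j) :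
    ∑ i ∈ range j, x (cyclicShift n r i) =
      ∑ i ∈ range n, x i - ∑ i ∈ range r, x i + ∑ i ∈ range (r + j - n), x i := by
  obtain ⟨m, rfl⟩ : ∃ m, j = n - r + m := ⟨r + j - n, by omega⟩
  rw [sum_range_add, sum_range_comp_cyclicShift_of_add_le x (by omega),
    show r + (n - r) = n by omega, show r + (n - r + m) - n = m by omega]
  congr 1
  refine sum_congr rfl fun i hi => ?_
  rw [mem_range] at hi
  rw [cyclicShift_of_lt (by omega), show n - r + i + r = i + n by omega, Nat.add_mod_right,
    Nat.mod_eq_of_lt (by omega)]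

end PartialSums

def StaysNonneg (x : ℕ → ℤ) (n : ℕ) : Prop := ∀ j < n, 0 ≤ ∑ i ∈ range j, x i

section CycleLemma

variable {x : ℕ → ℤ} {n : ℕ}

lemma staysNonneg_comp_cyclicShift_iff {r : ℕ} (hr : r < n) (hx : ∑ i ∈ range n, x i = -1) :
    StaysNonneg (x ∘ cyclicShift n r) n ↔ ∀ t < n, ∑ i ∈ range r, x i ≤ ∑ i ∈ range t, x i ∧
      (t < r → ∑ i ∈ range r, x i < ∑ i ∈ range t, x i) := by
  constructor
  · intro hstay t ht
    rcases le_or_gt r t with hrt | htr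
    · have h := hstay (t - r) (by omega)
      rw [Function.comp_def, sum_range_comp_cyclicShift_of_add_le x (by omega),
        show r + (t - r) = t by omega] at h
      exact ⟨by linarith, by omega⟩
    · have h := hstay (t + n - r) (by omega)
      rw [Function.comp_def, sum_range_comp_cyclicShift_of_le_add x hr (by omega) (by omega), hx,
        show r + (t + n - r) - n = t by omega] at h
      exact ⟨by linarith, fun _ => by linarith⟩
  · intro hmin j hj
    rw [Function.comp_def]
    rcases lt_trichotomy (r + j) n with hlt | heq | hgt
    · rw [sum_range_comp_cyclicShift_of_add_le x hlt.le]
      linarith [(hmin (r + j) hlt).1]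
    · rw [sum_range_comp_cyclicShift_of_add_le x heq.le, heq, hx]
      have h := (hmin 0 (by omega)).2 (by omega)
      rw [sum_range_zero] at h
      linarith
    · rw [sum_range_comp_cyclicShift_of_le_add x hr hj.le hgt.le, hx]
      linarith [(hmin (r + j - n) (by omega)).2 (by omega)]

theorem existsUnique_staysNonneg_comp_cyclicShift (hx : ∑ i ∈ range n, x i = -1) :
    ∃! r, r < n ∧ StaysNonneg (x ∘ cyclicShift n r) n := by
  classical
  have hn : (range n).Nonempty := nonempty_range_iff.mpr (by rintro rfl; simp at hx)
  obtain ⟨m, hm, hmin⟩ := exists_min_image (range n) (fun t => ∑ i ∈ range t, x i) hn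
  have hex : ∃ r < n, ∀ t < n, ∑ i ∈ range r, x i ≤ ∑ i ∈ range t, x i :=
    ⟨m, mem_range.mp hm, fun t ht => hmin t (mem_range.mpr ht)⟩
  obtain ⟨hr, hrmin⟩ := Nat.find_spec hex
  refine ⟨Nat.find hex, ⟨hr, (staysNonneg_comp_cyclicShift_iff hr hx).mpr fun t ht =>
    ⟨hrmin t ht, fun htr => ?_⟩⟩, fun r' ⟨hr', hstay⟩ => ?_⟩
  · obtain ⟨s, hs, hst⟩ : ∃ s < n, ∑ i ∈ range s, x i < ∑ i ∈ range t, x i := by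
      simpa [ht] using Nat.find_min hex htr
    exact (hrmin s hs).trans_lt hst
  · have h' := (staysNonneg_comp_cyclicShift_iff hr' hx).mp hstay
    refine le_antisymm ?_ (Nat.find_min' hex ⟨hr', fun t ht => (h' t ht).1⟩)
    by_contra! hlt
    exact (hrmin r' hr').not_gt ((h' _ hr).2 hlt)

end CycleLemma

lemma sInf_hitting_eq_iff {x : ℕ → ℤ} (hx : ∀ i, -1 ≤ x i) {n : ℕ} (hn : n ≠ 0) :
    sInf {j | 1 ≤ j ∧ ∑ i ∈ range j, x i = -1} = n ↔
      ∑ i ∈ range n, x i = -1 ∧ StaysNonneg x n := by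
  set H := {j | 1 ≤ j ∧ ∑ i ∈ range j, x i = -1}
  constructor
  · intro hT
    have hmem : n ∈ H :=
      hT ▸ Nat.sInf_mem (Nat.nonempty_of_pos_sInf (hT ▸ Nat.pos_of_ne_zero hn))
    have hbefore : ∀ j, 1 ≤ j → j < n → ∑ i ∈ range j, x i ≠ -1 :=
      fun j h1 hj hS => Nat.notMem_of_lt_sInf (s := H) (hT ▸ hj) ⟨h1, hS⟩
    refine ⟨hmem.2, fun j hj => ?_⟩
    induction j with
    | zero => simp
    | succ p ih =>
      have h := hbefore (p + 1) (by omega) hj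
      rw [sum_range_succ] at h ⊢
      have := ih (by omega)
      have := hx p
      omega
  · rintro ⟨hS, hstay⟩
    have hmem : n ∈ H := ⟨by omega, hS⟩
    refine le_antisymm (Nat.sInf_le hmem) (le_csInf ⟨n, hmem⟩ fun j ⟨_, hj⟩ => ?_)
    by_contra! hjn
    linarith [hstay j hjn]

section CyclicExchangeability

variable {Ω β : Type*} [MeasurableSpace Ω] [MeasurableSpace β] {P : Measure Ω}

lemma map_comp_eq_map_of_injective {ι : Type*} {ξ : ι → Ω → β}
    (hmeas : ∀ i, Measurable (ξ i)) (hindep : iIndepFun ξ P) {i₀ : ι}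
    (hident : ∀ i, IdentDistrib (ξ i) (ξ i₀) P P)
    {σ : ι → ι} (hσ : σ.Injective) :
    P.map (fun ω i => ξ (σ i) ω) = P.map (fun ω i => ξ i ω) := by
  rw [(hindep.precomp hσ).map_fun_eq_infinitePi_map (fun i => hmeas (σ i)),
    hindep.map_fun_eq_infinitePi_map hmeas]
  congr 1
  funext i
  rw [(hident (σ i)).map_eq, (hident i).map_eq]

lemma measure_preimage_eq_mul_of_existsUnique_cyclicShift
    {ξ : ℕ → Ω → β} (hmeas : ∀ i, Measurable (ξ i)) (hindep : iIndepFun ξ P) {i₀ : ℕ}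
    (hident : ∀ i, IdentDistrib (ξ i) (ξ i₀) P P) {n : ℕ} {B C : Set (ℕ → β)}
    (hB : MeasurableSet B) (hC : ∀ s ∈ C, ∃! r, r < n ∧ s ∘ cyclicShift n r ∈ B)
    (hBC : ∀ s r, s ∘ cyclicShift n r ∈ B → s ∈ C) :
    P ((fun ω i => ξ i ω) ⁻¹' C) = n * P ((fun ω i => ξ i ω) ⁻¹' B) := by
  have hshift : ∀ r, Measurable fun ω i => ξ (cyclicShift n r i) ω :=
    fun r => measurable_pi_lambda _ fun i => hmeas _
  have hE : ∀ r,
      P ((fun ω i => ξ (cyclicShift n r i) ω) ⁻¹' B) = P ((fun ω i => ξ i ω) ⁻¹' B) := by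
    intro r
    rw [← Measure.map_apply (hshift r) hB, ← Measure.map_apply (measurable_pi_lambda _ hmeas) hB,
      map_comp_eq_map_of_injective hmeas hindep hident (cyclicShift_injective n r)]
  have hcover : (fun ω i => ξ i ω) ⁻¹' C =
      ⋃ r ∈ range n, (fun ω i => ξ (cyclicShift n r i) ω) ⁻¹' B := by
    ext ω
    simp only [Set.mem_preimage, Set.mem_iUnion, mem_range, exists_prop]
    exact ⟨fun h => (hC _ h).exists, fun ⟨r, _, h⟩ => hBC _ r h⟩
  rw [hcover, measure_biUnion_finset, sum_congr rfl fun r _ => hE r, sum_const, card_range,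
    nsmul_eq_mul]
  · intro r hr r' hr' hne
    exact Set.disjoint_left.mpr fun ω h h' => hne <|
      (hC _ (hBC (fun i => ξ i ω) r h)).unique ⟨mem_range.mp hr, h⟩ ⟨mem_range.mp hr', h'⟩
  · exact fun r _ => hshift r hB

end CyclicExchangeability

/-- `s i` is the pair (clone children, mutant children) of the `i`-th individual in breadth-first
order; the partial sums of these steps form the Łukasiewicz walk `Σ_j - j`. -/
def lukasiewiczStep (s : ℕ → ℕ × ℕ) (i : ℕ) : ℤ := (s i).1 + (s i).2 - 1

/-- The event of probability `π^{*n}_{n-k, k-1}`. -/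
def convolutionSet (n k : ℕ) : Set (ℕ → ℕ × ℕ) :=
  {s | ∑ i ∈ range n, (s i).1 = n - k ∧ ∑ i ∈ range n, (s i).2 = k - 1}

def sizeAllelesSet (n k : ℕ) : Set (ℕ → ℕ × ℕ) :=
  {s | s ∈ convolutionSet n k ∧ StaysNonneg (lukasiewiczStep s) n}

section Trees

variable {s : ℕ → ℕ × ℕ} {n k : ℕ}

lemma sum_range_lukasiewiczStep (s : ℕ → ℕ × ℕ) (j : ℕ) :
    ∑ i ∈ range j, lukasiewiczStep s i =
      ((∑ i ∈ range j, (s i).1 : ℕ) : ℤ) + ((∑ i ∈ range j, (s i).2 : ℕ) : ℤ) - j := by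
  simp [lukasiewiczStep, sum_sub_distrib, sum_add_distrib]

lemma sum_range_lukasiewiczStep_of_mem_convolutionSet (hk1 : 1 ≤ k) (hkn : k ≤ n)
    (hs : s ∈ convolutionSet n k) : ∑ i ∈ range n, lukasiewiczStep s i = -1 := by
  rw [sum_range_lukasiewiczStep, hs.1, hs.2]
  omega

lemma comp_cyclicShift_mem_convolutionSet_iff (r : ℕ) :
    s ∘ cyclicShift n r ∈ convolutionSet n k ↔ s ∈ convolutionSet n k := by
  simp only [convolutionSet, Set.mem_ofPred_eq, Function.comp_apply,
    sum_range_comp_cyclicShift (fun i => (s i).1), sum_range_comp_cyclicShift (fun i => (s i).2)]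

lemma existsUnique_cyclicShift_mem_sizeAllelesSet (hk1 : 1 ≤ k) (hkn : k ≤ n)
    (hs : s ∈ convolutionSet n k) : ∃! r, r < n ∧ s ∘ cyclicShift n r ∈ sizeAllelesSet n k := by
  refine (existsUnique_congr fun r => ?_).mp (existsUnique_staysNonneg_comp_cyclicShift
    (sum_range_lukasiewiczStep_of_mem_convolutionSet hk1 hkn hs))
  simp only [sizeAllelesSet, Set.mem_ofPred_eq, comp_cyclicShift_mem_convolutionSet_iff, hs,
    true_and]
  rfl

lemma measurableSet_sizeAllelesSet (n k : ℕ) : MeasurableSet (sizeAllelesSet n k) := by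
  simp only [sizeAllelesSet, convolutionSet, StaysNonneg, lukasiewiczStep, Set.mem_ofPred_eq]
  measurability

lemma sInf_hitting_eq_and_alleles_eq_iff (hk1 : 1 ≤ k) (hkn : k ≤ n) :
    sInf {j | 1 ≤ j ∧ ∑ i ∈ range j, (((s i).1 : ℤ) + (s i).2) = j - 1} = n ∧
      1 + ∑ i ∈ range n, (s i).2 = k ↔ s ∈ sizeAllelesSet n k := by
  have hset : {j | 1 ≤ j ∧ ∑ i ∈ range j, (((s i).1 : ℤ) + (s i).2) = j - 1} =
      {j | 1 ≤ j ∧ ∑ i ∈ range j, lukasiewiczStep s i = -1} := by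
    ext j
    rw [Set.mem_ofPred_eq, Set.mem_ofPred_eq, sum_range_lukasiewiczStep, sum_add_distrib]
    push_cast
    omega
  rw [hset, sInf_hitting_eq_iff (fun i => by unfold lukasiewiczStep; omega) (by omega),
    sum_range_lukasiewiczStep]
  simp only [sizeAllelesSet, convolutionSet, Set.mem_ofPred_eq]
  constructor
  · rintro ⟨⟨h, hstay⟩, hA⟩
    exact ⟨⟨by omega, by omega⟩, hstay⟩
  · rintro ⟨⟨h1, h2⟩, hstay⟩
    exact ⟨⟨by omega, hstay⟩, by omega⟩

end Trees

end GaltonWatson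

open GaltonWatson

theorem size_and_number_of_alleles_general
    {Ω : Type*} [MeasureSpace Ω] (P : Measure Ω := volume)
    (ξ : ℕ → Ω → ℕ × ℕ) (hmeas : ∀ i, Measurable (ξ i))
    (hindep : iIndepFun ξ P)
    (hident : ∀ i, IdentDistrib (ξ i) (ξ 0) P P)
    (T : Ω → ℕ)
    (hT : ∀ ω, T ω = sInf {j : ℕ | 1 ≤ j ∧
      (∑ i ∈ Finset.range j, (((ξ i ω).1 : ℤ) + ((ξ i ω).2 : ℤ))) = (j : ℤ) - 1})
    (A : Ω → ℕ)
    (hA : ∀ ω, A ω = 1 + ∑ i ∈ Finset.range (T ω), (ξ i ω).2)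
    (n k : ℕ) (hk1 : 1 ≤ k) (hkn : k ≤ n) :
    P {ω | T ω = n ∧ A ω = k}
      = (n : ENNReal)⁻¹ *
        P {ω | (∑ i ∈ Finset.range n, (ξ i ω).1) = n - k
             ∧ (∑ i ∈ Finset.range n, (ξ i ω).2) = k - 1} := by
  have hevent : {ω | T ω = n ∧ A ω = k} = (fun ω i => ξ i ω) ⁻¹' sizeAllelesSet n k := by
    ext ω
    rw [Set.mem_ofPred_eq, hA, hT, Set.mem_preimage,
      ← sInf_hitting_eq_and_alleles_eq_iff hk1 hkn]
    exact and_congr_right fun h => by rw [h]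
  rw [hevent, ← ENNReal.inv_mul_cancel_left (a := (n : ENNReal))
    (b := P ((fun ω i => ξ i ω) ⁻¹' sizeAllelesSet n k)) (Nat.cast_ne_zero.mpr (by omega))
    (ENNReal.natCast_ne_top n)]
  congr 1
  exact (measure_preimage_eq_mul_of_existsUnique_cyclicShift hmeas hindep hident
    (measurableSet_sizeAllelesSet n k)
    (fun s hs => existsUnique_cyclicShift_mem_sizeAllelesSet hk1 hkn hs)
    (fun s r h => (comp_cyclicShift_mem_convolutionSet_iff r).mp h.1)).symm

/-- Joint law of the size of a Galton–Watson tree with neutral mutations and of its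
number of alleles: `P(T = n, A = k) = (1/n) π^{*n}_{n-k, k-1}`, where `T` is the first
time the total-offspring walk hits `-1` (the total size of the tree of one ancestor) and
`A = 1 + (number of mutant children born before time T)` is the number of alleles. -/
theorem size_and_number_of_alleles
    {Ω : Type*} [MeasureSpace Ω] (P : Measure Ω := volume) [IsProbabilityMeasure P]
    (ξ : ℕ → Ω → ℕ × ℕ) (hmeas : ∀ i, Measurable (ξ i))
    (hindep : iIndepFun ξ P)
    (hident : ∀ i, IdentDistrib (ξ i) (ξ 0) P P)
    (hint : Integrable (fun ω => (((ξ 0 ω).1 : ℝ) + ((ξ 0 ω).2 : ℝ))) P)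
    (hmean : (∫ ω, (((ξ 0 ω).1 : ℝ) + ((ξ 0 ω).2 : ℝ)) ∂P) ≤ 1)
    (T : Ω → ℕ)
    (hT : ∀ ω, T ω = sInf {j : ℕ | 1 ≤ j ∧
      (∑ i ∈ Finset.range j, (((ξ i ω).1 : ℤ) + ((ξ i ω).2 : ℤ))) = (j : ℤ) - 1})
    (A : Ω → ℕ)
    (hA : ∀ ω, A ω = 1 + ∑ i ∈ Finset.range (T ω), (ξ i ω).2)
    (n k : ℕ) (hk1 : 1 ≤ k) (hkn : k ≤ n) :
    P {ω | T ω = n ∧ A ω = k}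
      = (n : ENNReal)⁻¹ *
        P {ω | (∑ i ∈ Finset.range n, (ξ i ω).1) = n - k
             ∧ (∑ i ∈ Finset.range n, (ξ i ω).2) = k - 1} :=
  size_and_number_of_alleles_general P ξ hmeas hindep hident T hT A hA n k hk1 hkn
end

section
/- Let ξ = (ξ^c, ξ^m) with i.i.d. copies (ξ^c_i, ξ^m_i), E(ξ^c + ξ^m) ≤ 1. Define S^+_n = Σ_{i≤n}(ξ^c_i + ξ^m_i) − n, S^c_n = Σ_{i≤n} ξ^c_i − n, T^+_i = inf{n : S^+_n = −i}, T^c_j = inf{n : S^c_n = −j}. Then almost surely the range {T^+_i : i ≥ 0} is contained in the range {T^c_j : j ≥ 0}. -/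
/-!
Write `S^+ = S^c + D` with `D_n = Σ_{j<n} ξ^m_j` nondecreasing. If `n = T^+_i` and some `m < n`
had `S^c_m = S^c_n`, then `S^+_m ≤ S^+_n = -i`, so the downward skip-free walk `S^+` would
already have visited `-i` by time `m`. Hence `n` is the first visit of `S^c` to its own level
`S^c_n ≤ S^+_n ≤ 0`. The statement is pathwise; when `S^+` never reaches `-i`, both sides are
the junk value `sInf ∅ = 0 = T^c_0`.
-/

set_option autoImplicit false

open MeasureTheory ProbabilityTheory Filter Finset

noncomputable def firstHit (S : ℕ → ℤ) (a : ℤ) : ℕ := sInf {m | S m = a}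

def DownSkipFree (S : ℕ → ℤ) : Prop := ∀ k, S k - 1 ≤ S (k + 1)

namespace DownSkipFree

variable {S : ℕ → ℤ}

lemma exists_le_eq (hS : DownSkipFree S) {a : ℤ} {m : ℕ} (hm : S m ≤ a) (h0 : a ≤ S 0) :
    ∃ k ≤ m, S k = a := by
  induction m with
  | zero => exact ⟨0, le_rfl, le_antisymm hm h0⟩
  | succ m ih =>
    rcases hm.eq_or_lt with heq | hlt
    · exact ⟨m + 1, le_rfl, heq⟩
    · obtain ⟨k, hk, hSk⟩ := ih (by linarith [hS m])
      exact ⟨k, hk.trans m.le_succ, hSk⟩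

lemma firstHit_le (hS : DownSkipFree S) {a : ℤ} {m : ℕ} (hm : S m ≤ a) (h0 : a ≤ S 0) :
    firstHit S a ≤ m := by
  obtain ⟨k, hkm, hSk⟩ := hS.exists_le_eq hm h0
  exact (Nat.sInf_le hSk).trans hkm

end DownSkipFree

lemma downSkipFree_sum_range_sub (x : ℕ → ℤ) (hx : ∀ j, 0 ≤ x j) :
    DownSkipFree fun m => ∑ j ∈ range m, x j - m := by
  intro k
  simp only [sum_range_succ]
  push_cast
  linarith [hx k]

lemma monotone_sum_range_of_nonneg (y : ℕ → ℤ) (hy : ∀ j, 0 ≤ y j) :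
    Monotone fun m => ∑ j ∈ range m, y j :=
  (sum_mono_set_of_nonneg hy).comp range_mono

lemma firstHit_comp_firstHit {f g : ℕ → ℤ} (hg : DownSkipFree g) (hgf : Monotone (g - f))
    {a : ℤ} (ha : a ≤ g 0) (hhit : ∃ m, g m = a) :
    firstHit f (f (firstHit g a)) = firstHit g a := by
  set n := firstHit g a
  have hgn : g n = a := Nat.sInf_mem hhit
  refine le_antisymm (Nat.sInf_le rfl) (not_lt.mp fun hlt => ?_)
  set m := firstHit f (f n)
  have hfm : f m = f n := Nat.sInf_mem (s := {k | f k = f n}) ⟨n, rfl⟩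
  have hgm : g m ≤ a := by
    have := hgf hlt.le
    simp only [Pi.sub_apply] at this
    linarith
  exact hlt.not_ge (hg.firstHit_le hgm ha)

theorem range_Tplus_subset_range_Tc_general
    {Ω : Type*} [MeasureSpace Ω] (P : Measure Ω := volume)
    (ξ : ℕ → Ω → ℕ × ℕ)
    (Tp Tc : ℕ → Ω → ℕ)
    (hTp : ∀ i ω, Tp i ω = sInf {m : ℕ |
      (∑ j ∈ Finset.range m, (((ξ j ω).1 : ℤ) + ((ξ j ω).2 : ℤ))) - m = -(i : ℤ)})
    (hTc : ∀ i ω, Tc i ω = sInf {m : ℕ |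
      (∑ j ∈ Finset.range m, ((ξ j ω).1 : ℤ)) - m = -(i : ℤ)}) :
    ∀ᵐ ω ∂P, ∀ i : ℕ, ∃ j : ℕ, Tc j ω = Tp i ω := by
  refine ae_of_all _ fun ω i => ?_
  set Sp : ℕ → ℤ := fun m => ∑ j ∈ range m, (((ξ j ω).1 : ℤ) + ((ξ j ω).2 : ℤ)) - m
  set Sc : ℕ → ℤ := fun m => ∑ j ∈ range m, ((ξ j ω).1 : ℤ) - m
  have hTp' : Tp i ω = firstHit Sp (-i) := hTp i ω
  have hdiff : Sp - Sc = fun m => ∑ j ∈ range m, ((ξ j ω).2 : ℤ) := by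
    ext m
    simp only [Sp, Sc, Pi.sub_apply, sum_add_distrib]
    ring
  by_cases hhit : ∃ m, Sp m = -i
  · have hSc_nonpos : Sc (Tp i ω) ≤ 0 := by
      have hSp : Sp (Tp i ω) = -i := hTp' ▸ Nat.sInf_mem hhit
      have hD := congrFun hdiff (Tp i ω)
      simp only [Pi.sub_apply] at hD
      linarith [sum_nonneg fun j (_ : j ∈ range (Tp i ω)) => Int.natCast_nonneg (ξ j ω).2]
    refine ⟨(-Sc (Tp i ω)).toNat, ?_⟩
    rw [hTc, Int.toNat_of_nonneg (by linarith), neg_neg, hTp']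
    exact firstHit_comp_firstHit (downSkipFree_sum_range_sub _ fun j => by positivity)
      (hdiff ▸ monotone_sum_range_of_nonneg _ fun j => by positivity) (by simp) hhit
  · have hTp_zero : Tp i ω = 0 := hTp'.trans <| Nat.sInf_eq_zero.mpr <|
      Or.inr (Set.eq_empty_iff_forall_notMem.mpr fun m hm => hhit ⟨m, hm⟩)
    have hTc_zero : Tc 0 ω = 0 := (hTc 0 ω).trans <| Nat.sInf_eq_zero.mpr (Or.inl (by simp))
    exact ⟨0, hTc_zero.trans hTp_zero.symm⟩

/-- The range of the passage times of the total-offspring walk `S^+` is almost surely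
contained in the range of the passage times of the clone-offspring walk `S^c`:
predecessors of ancestors are also predecessors of mutants. -/
theorem range_Tplus_subset_range_Tc
    {Ω : Type*} [MeasureSpace Ω] (P : Measure Ω := volume) [IsProbabilityMeasure P]
    (ξ : ℕ → Ω → ℕ × ℕ) (hmeas : ∀ i, Measurable (ξ i))
    (hindep : iIndepFun ξ P)
    (hident : ∀ i, IdentDistrib (ξ i) (ξ 0) P P)
    (hint : Integrable (fun ω => (((ξ 0 ω).1 : ℝ) + ((ξ 0 ω).2 : ℝ))) P)
    (hmean : (∫ ω, (((ξ 0 ω).1 : ℝ) + ((ξ 0 ω).2 : ℝ)) ∂P) ≤ 1)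
    (Tp Tc : ℕ → Ω → ℕ)
    (hTp : ∀ i ω, Tp i ω = sInf {m : ℕ |
      (∑ j ∈ Finset.range m, (((ξ j ω).1 : ℤ) + ((ξ j ω).2 : ℤ))) - m = -(i : ℤ)})
    (hTc : ∀ i ω, Tc i ω = sInf {m : ℕ |
      (∑ j ∈ Finset.range m, ((ξ j ω).1 : ℤ)) - m = -(i : ℤ)}) :
    ∀ᵐ ω ∂P, ∀ i : ℕ, ∃ j : ℕ, Tc j ω = Tp i ω :=
  range_Tplus_subset_range_Tc_general P ξ Tp Tc hTp hTc
end

section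
/- With the notation of the allelic decomposition (|C_j| = T^c_j − T^c_{j−1} the size of the j-th allelic cluster, M_j the number of its mutant-children), for every k ≥ 1, integers n_1,...,n_k ≥ 1 and ℓ_1,...,ℓ_k ≥ 0 satisfying ℓ_1+...+ℓ_j > j−1 for all 1 ≤ j < k, one has P(|C_1| = n_1, M_1 = ℓ_1, ..., |C_k| = n_k, M_k = ℓ_k) = Π_{i=1}^k (1/n_i) π^{*n_i}_{n_i − 1, ℓ_i}. -/
/-!
Let `S_m = ∑_{i<m} ξ^c_i - m` be the walk of the clone-children counts, so that `T^c_j` is the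
first time `S` hits `-j`. Since `S` moves down by at most one per step, the event
`|C_i| = n_i, M_i = ℓ_i (i ≤ k)` says exactly that, with `N_i = n_1 + ⋯ + n_{i-1}`, each block
`ξ_{N_i}, …, ξ_{N_i + n_i - 1}` is a first passage path from `0` to `-1` of length `n_i` carrying
`ℓ_i` mutants. The blocks are disjoint, so by independence the probability factorises, and each
block has the law of `ξ_0, …, ξ_{n_i - 1}`. By the cycle lemma, exactly one of the `n` cyclic
rotations of a path with `∑ ξ^c = n - 1` is a first passage path; rotations preserve the law of the
block and its number of mutants, hence
`P(first passage at n, ℓ mutants) = n⁻¹ P(∑ ξ^c = n - 1, ∑ ξ^m = ℓ) = n⁻¹ π^{*n}_{n-1,ℓ}`.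
-/

open MeasureTheory ProbabilityTheory Finset

namespace AllelicClusters

def walk (x : ℕ → ℕ) (m : ℕ) : ℤ := ∑ i ∈ range m, (x i : ℤ) - m

def IsFirstHit (x : ℕ → ℕ) (j t : ℕ) : Prop := walk x t = -j ∧ ∀ m < t, walk x m ≠ -j

-- `sInf ∅ = 0`: a level that is never reached gets hitting time `0`.
noncomputable def hitTime (x : ℕ → ℕ) (j : ℕ) : ℕ := sInf {m | walk x m = -j}

section Walk

variable {x : ℕ → ℕ}

@[simp] lemma walk_zero : walk x 0 = 0 := by simp [walk]

lemma walk_succ (m : ℕ) : walk x (m + 1) = walk x m + x m - 1 := by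
  simp only [walk, sum_range_succ]; push_cast; ring

lemma walk_add (a m : ℕ) : walk x (a + m) = walk x a + walk (fun i => x (a + i)) m := by
  simp only [walk, sum_range_add]; push_cast; ring

lemma walk_congr {y : ℕ → ℕ} {t : ℕ} (h : ∀ i < t, x i = y i) : walk x t = walk y t := by
  simp only [walk]
  rw [sum_congr rfl fun i hi => by rw [h i (mem_range.mp hi)]]

lemma dependsOn_isFirstHit (j t : ℕ) : DependsOn (fun x : ℕ → ℕ => IsFirstHit x j t) (Set.Iio t) :=
  fun x y h => by
    have hw : ∀ m ≤ t, walk x m = walk y m := fun m hm =>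
      walk_congr fun i hi => h i (Set.mem_Iio.mpr (by omega))
    simp only [IsFirstHit, hw t le_rfl]
    exact propext <| and_congr_right' <| forall₂_congr fun m hm => by rw [hw m hm.le]

lemma isFirstHit_zero : IsFirstHit x 0 0 := by simp [IsFirstHit]

-- The walk is skip-free downwards, so it cannot get below `-j` without visiting `-j`.
lemma IsFirstHit.neg_lt_walk {j t : ℕ} (h : IsFirstHit x j t) {m : ℕ} (hm : m < t) :
    -(j : ℤ) < walk x m := by
  induction m with
  | zero =>
    rcases j.eq_zero_or_pos with rfl | hj
    · exact absurd (by simp) (h.2 0 hm)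
    · rw [walk_zero]; omega
  | succ m ih =>
    have := ih (by omega)
    have := h.2 (m + 1) hm
    rw [walk_succ] at this ⊢
    omega

lemma isFirstHit_iff_neg_lt_walk {j t : ℕ} :
    IsFirstHit x j t ↔ walk x t = -j ∧ ∀ m < t, -(j : ℤ) < walk x m :=
  ⟨fun h => ⟨h.1, fun _ => h.neg_lt_walk⟩, fun h => ⟨h.1, fun m hm => (h.2 m hm).ne'⟩⟩

lemma hitTime_eq_iff {j t : ℕ} (ht : 0 < t) : hitTime x j = t ↔ IsFirstHit x j t := by
  refine ⟨fun h => ?_, fun h => IsLeast.csInf_eq ⟨h.1, fun m hm => ?_⟩⟩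
  · have hne : {m | walk x m = -j}.Nonempty := by
      by_contra he
      rw [hitTime, Set.not_nonempty_iff_eq_empty.mp he, Nat.sInf_empty] at h
      omega
    rw [← h]
    exact ⟨Nat.sInf_mem hne, fun m hm => Nat.notMem_of_lt_sInf hm⟩
  · exact not_lt.mp fun hlt => h.2 m hlt hm

lemma IsFirstHit.add_iff {j a n : ℕ} (ha : IsFirstHit x j a) :
    IsFirstHit x (j + 1) (a + n) ↔ IsFirstHit (fun i => x (a + i)) 1 n := by
  have hshift : ∀ m, walk x (a + m) = -j + walk (fun i => x (a + i)) m := fun m => by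
    rw [walk_add, ha.1]
  simp only [isFirstHit_iff_neg_lt_walk, hshift]
  push_cast
  refine and_congr (by omega) ⟨fun h m hm => by linarith [h (a + m) (by omega), hshift m], ?_⟩
  intro h m hm
  rcases lt_or_ge m a with hma | hma
  · linarith [ha.neg_lt_walk hma]
  · obtain ⟨m, rfl⟩ := Nat.exists_eq_add_of_le hma
    linarith [h m (by omega), hshift m]

lemma isFirstHit_partialSums_iff (nn : ℕ → ℕ) (k : ℕ) :
    (∀ i < k + 1, IsFirstHit x i (∑ l ∈ range i, nn l)) ↔
      ∀ i < k, IsFirstHit (fun j => x (∑ l ∈ range i, nn l + j)) 1 (nn i) := by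
  induction k with
  | zero => simp [isFirstHit_zero]
  | succ k ih =>
    rw [Nat.forall_lt_succ_right (n := k), Nat.forall_lt_succ_right (n := k + 1), ← ih]
    refine and_congr_right fun h => ?_
    rw [sum_range_succ]
    exact (h k k.lt_succ_self).add_iff

@[simp] lemma hitTime_zero : hitTime x 0 = 0 := Nat.sInf_eq_zero.mpr (.inl (by simp))

lemma walk_eq_neg_one_iff {n : ℕ} (hn : 0 < n) : walk x n = -1 ↔ ∑ i ∈ range n, x i = n - 1 := by
  simp only [walk, ← Nat.cast_sum]
  omega

end Walk

lemma forall_sub_eq_iff_eq_partialSums {T nn : ℕ → ℕ} (hT : T 0 = 0) {k : ℕ}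
    (hnn : ∀ i < k, 0 < nn i) :
    (∀ i < k, T (i + 1) - T i = nn i) ↔ ∀ i < k + 1, T i = ∑ l ∈ range i, nn l := by
  induction k with
  | zero => simp [hT]
  | succ k ih =>
    rw [Nat.forall_lt_succ_right, ih fun i hi => hnn i (by omega),
      Nat.forall_lt_succ_right (n := k + 1)]
    refine and_congr_right fun h => ?_
    rw [sum_range_succ, h k k.lt_succ_self]
    have := hnn k k.lt_succ_self
    omega

def IsCluster (n ℓ : ℕ) (g : ℕ → ℕ × ℕ) : Prop :=
  IsFirstHit (fun i => (g i).1) 1 n ∧ ∑ i ∈ range n, (g i).2 = ℓ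

lemma dependsOn_isCluster (n ℓ : ℕ) : DependsOn (IsCluster n ℓ) (Set.Iio n) := fun g g' h => by
  have hsum : ∑ i ∈ range n, (g i).2 = ∑ i ∈ range n, (g' i).2 :=
    sum_congr rfl fun i hi => by rw [h i (by simpa using hi)]
  simp only [IsCluster, hsum, dependsOn_isFirstHit 1 n fun i hi => congrArg Prod.fst (h i hi)]

lemma forall_hitTime_iff_isCluster (g : ℕ → ℕ × ℕ) {k : ℕ} {nn : ℕ → ℕ} (ll : ℕ → ℕ)
    (hnn : ∀ i < k, 0 < nn i) :
    (∀ i < k, hitTime (fun m => (g m).1) (i + 1) - hitTime (fun m => (g m).1) i = nn i ∧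
        ∑ l ∈ Ico (hitTime (fun m => (g m).1) i) (hitTime (fun m => (g m).1) (i + 1)),
          (g l).2 = ll i) ↔
      ∀ i < k, IsCluster (nn i) (ll i) (fun j => g (∑ l ∈ range i, nn l + j)) := by
  have hT : (∀ i < k + 1, hitTime (fun m => (g m).1) i = ∑ l ∈ range i, nn l) ↔
      ∀ i < k + 1, IsFirstHit (fun m => (g m).1) i (∑ l ∈ range i, nn l) :=
    forall₂_congr fun i hi => by
      rcases i.eq_zero_or_pos with rfl | hi0
      · simp [isFirstHit_zero]
      · refine hitTime_eq_iff ?_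
        have := hnn 0 (by omega)
        have := single_le_sum (fun l _ => Nat.zero_le (nn l)) (mem_range.mpr hi0)
        omega
  simp only [imp_and, forall_and, IsCluster]
  rw [forall_sub_eq_iff_eq_partialSums hitTime_zero hnn]
  refine (and_congr_right fun hTN => forall₂_congr fun i hi => ?_).trans
    (and_congr_left' (hT.trans (isFirstHit_partialSums_iff _ _)))
  rw [hTN i (by omega), hTN (i + 1) (by omega), sum_Ico_eq_sum_range, sum_range_succ,
    Nat.add_sub_cancel_left]

section Cycle

variable {x : ℕ → ℕ} {n : ℕ}

lemma sum_range_add_mod {M : Type*} [AddCommMonoid M] (f : ℕ → M) (n r : ℕ) :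
    ∑ i ∈ range n, f ((i + r) % n) = ∑ i ∈ range n, f i := by
  rcases n.eq_zero_or_pos with rfl | hn
  · simp
  have := NeZero.of_pos hn
  rw [← Fin.sum_univ_eq_sum_range, ← Fin.sum_univ_eq_sum_range]
  exact Fintype.sum_equiv (Equiv.addRight (Fin.ofNat n r)) _ _ fun i => by
    simp [Fin.val_add]

lemma walk_rotate (r : ℕ) : walk (fun i => x ((i + r) % n)) n = walk x n := by
  simp only [walk]
  rw [sum_range_add_mod (fun i => (x i : ℤ))]

lemma walk_mod_add (t : ℕ) :
    walk (fun i => x (i % n)) (n + t) = walk x n + walk (fun i => x (i % n)) t := by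
  rw [walk_add, walk_congr fun i hi => by rw [Nat.mod_eq_of_lt hi]]
  simp only [Nat.add_mod_left]

-- Rotating `x` by `r` amounts to restarting the walk of its periodic extension at time `r`.
lemma isFirstHit_rotate_iff (hx : walk x n = -1) (r : ℕ) :
    IsFirstHit (fun i => x ((i + r) % n)) 1 n ↔
      ∀ m < n, walk (fun i => x (i % n)) r ≤ walk (fun i => x (i % n)) (r + m) := by
  have hrot : (fun i => x ((i + r) % n)) = fun i => x ((r + i) % n) := by
    simp only [Nat.add_comm]
  rw [isFirstHit_iff_neg_lt_walk, walk_rotate, hx, hrot]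
  simp only [walk_add (x := fun i => x (i % n)) r, Nat.cast_one, true_and]
  exact forall₂_congr fun m _ => by omega

lemma exists_lt_forall_le_add {W : ℕ → ℤ} (hn : 0 < n) (hW : ∀ t, W (n + t) = W t - 1) :
    ∃ r < n, ∀ m < n, W r ≤ W (r + m) := by
  obtain ⟨s, hs, hmin⟩ := exists_min_image (range n) W ⟨0, mem_range.mpr hn⟩
  classical
  have hex : ∃ r, r < n ∧ W r = W s := ⟨s, mem_range.mp hs, rfl⟩
  obtain ⟨r, ⟨hrn, hrs⟩, hfirst⟩ : ∃ r, (r < n ∧ W r = W s) ∧ ∀ t < r, ¬(t < n ∧ W t = W s) :=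
    ⟨Nat.find hex, Nat.find_spec hex, fun _ => Nat.find_min hex⟩
  -- The first minimum on `[0, n)` works: past `n`, `W` is shifted down by one.
  refine ⟨r, hrn, fun m hm => ?_⟩
  rcases lt_or_ge (r + m) n with h | h
  · rw [hrs]; exact hmin _ (mem_range.mpr h)
  · obtain ⟨t, ht⟩ := Nat.exists_eq_add_of_le h
    have := hmin t (mem_range.mpr (by omega))
    have := hfirst t (by omega)
    rw [ht, hW, hrs]
    omega

lemma eq_of_forall_le_add {W : ℕ → ℤ} (hW : ∀ t, W (n + t) = W t - 1) {r r' : ℕ} (hr : r < n)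
    (hr' : r' < n) (h : ∀ m < n, W r ≤ W (r + m)) (h' : ∀ m < n, W r' ≤ W (r' + m)) : r = r' := by
  -- Two such points `a < b` would give `W a ≤ W b ≤ W (n + a) = W a - 1`.
  have key : ∀ a b, a < b → b < n → (∀ m < n, W a ≤ W (a + m)) → (∀ m < n, W b ≤ W (b + m)) →
      False := fun a b hab hbn ha hb => by
    have h1 := ha (b - a) (by omega)
    have h2 := hb (n - b + a) (by omega)
    rw [Nat.add_sub_cancel' hab.le] at h1
    rw [show b + (n - b + a) = n + a by omega, hW] at h2
    omega
  rcases lt_trichotomy r r' with hlt | heq | hgt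
  · exact (key r r' hlt hr' h h').elim
  · exact heq
  · exact (key r' r hgt hr h' h).elim

/-- The cycle lemma. -/
theorem existsUnique_isFirstHit_rotate (hn : 0 < n) (hx : walk x n = -1) :
    ∃! r, r < n ∧ IsFirstHit (fun i => x ((i + r) % n)) 1 n := by
  have hW : ∀ t, walk (fun i => x (i % n)) (n + t) = walk (fun i => x (i % n)) t - 1 :=
    fun t => by rw [walk_mod_add, hx]; ring
  simp only [isFirstHit_rotate_iff hx]
  obtain ⟨r, hr, hmin⟩ := exists_lt_forall_le_add hn hW
  exact ⟨r, ⟨hr, hmin⟩, fun r' ⟨hr', hmin'⟩ => eq_of_forall_le_add hW hr' hr hmin' hmin⟩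

lemma sum_eq_and_sum_eq_iff_exists_isCluster_rotate (g : ℕ → ℕ × ℕ) (hn : 0 < n) (ℓ : ℕ) :
    (∑ i ∈ range n, (g i).1 = n - 1 ∧ ∑ i ∈ range n, (g i).2 = ℓ) ↔
      ∃ r < n, IsCluster n ℓ (fun i => g ((i + r) % n)) := by
  simp only [IsCluster, sum_range_add_mod (fun i => (g i).2), ← walk_eq_neg_one_iff hn]
  constructor
  · rintro ⟨hx, hℓ⟩
    obtain ⟨r, ⟨hr, hfirst⟩, -⟩ := existsUnique_isFirstHit_rotate hn hx
    exact ⟨r, hr, hfirst, hℓ⟩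
  · rintro ⟨r, -, hfirst, hℓ⟩
    exact ⟨walk_rotate (x := fun i => (g i).1) r ▸ hfirst.1, hℓ⟩

lemma eq_of_isCluster_rotate {g : ℕ → ℕ × ℕ} {ℓ r r' : ℕ} (hr : r < n) (hr' : r' < n)
    (h : IsCluster n ℓ (fun i => g ((i + r) % n)))
    (h' : IsCluster n ℓ (fun i => g ((i + r') % n))) : r = r' :=
  (existsUnique_isFirstHit_rotate (by omega) (walk_rotate (x := fun i => (g i).1) r ▸ h.1.1)).unique
    ⟨hr, h.1⟩ ⟨hr', h'.1⟩

end Cycle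

lemma setOf_eq_preimage_domRestrict {Ω ι α : Type*} (ξ : ι → Ω → α) {G : (ι → α) → Prop}
    {s : Set ι} (hG : DependsOn G s) :
    ∃ S : Set (s → α), {ω | G (ξ · ω)} = (fun ω (i : s) => ξ i ω) ⁻¹' S := by
  obtain ⟨g, rfl⟩ := dependsOn_iff_exists_comp.mp hG
  exact ⟨{v | g v}, rfl⟩

section Probability

variable {Ω ι α : Type*} [MeasurableSpace Ω] [MeasurableSpace α] {P : Measure Ω}

lemma map_comp_eq_pi [IsProbabilityMeasure P] {ξ : ι → Ω → α} {i₀ : ι} (hindep : iIndepFun ξ P)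
    (hident : ∀ i, IdentDistrib (ξ i) (ξ i₀) P P) {κ : Type*} [Fintype κ] {σ : κ → ι}
    (hσ : σ.Injective) :
    P.map (fun ω k => ξ (σ k) ω) = Measure.pi fun _ => P.map (ξ i₀) := by
  rw [(hindep.precomp hσ).map_fun_eq_pi_map fun k => (hident _).aemeasurable_fst]
  simp only [(hident _).map_eq]

variable [Countable α] [MeasurableSingletonClass α]

lemma nullMeasurableSet_setOf_of_dependsOn {ξ : ι → Ω → α} (hξ : ∀ i, AEMeasurable (ξ i) P)
    {G : (ι → α) → Prop} {s : Finset ι} (hG : DependsOn G s) :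
    NullMeasurableSet {ω | G (ξ · ω)} P := by
  obtain ⟨S, hS⟩ := setOf_eq_preimage_domRestrict ξ hG
  rw [hS]
  exact (aemeasurable_pi_lambda (fun ω (i : (s : Set ι)) => ξ i ω) fun i => hξ i).nullMeasurable
    .of_discrete

lemma measure_setOf_and_eq_mul {ξ : ι → Ω → α} (hindep : iIndepFun ξ P)
    (hξ : ∀ i, AEMeasurable (ξ i) P) {G H : (ι → α) → Prop} {s t : Finset ι}
    (hst : Disjoint s t) (hG : DependsOn G s) (hH : DependsOn H t) :
    P {ω | G (ξ · ω) ∧ H (ξ · ω)} = P {ω | G (ξ · ω)} * P {ω | H (ξ · ω)} := by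
  obtain ⟨S, hS⟩ := setOf_eq_preimage_domRestrict ξ hG
  obtain ⟨T, hT⟩ := setOf_eq_preimage_domRestrict ξ hH
  rw [Set.ofPred_and, hS, hT]
  exact (hindep.indepFun_finset₀ s t hst hξ).measure_inter_preimage_eq_mul _ _ .of_discrete
    .of_discrete

lemma measure_setOf_comp_eq_of_injOn [IsProbabilityMeasure P] {ξ : ℕ → Ω → α}
    (hindep : iIndepFun ξ P) (hident : ∀ i, IdentDistrib (ξ i) (ξ 0) P P)
    {G : (ℕ → α) → Prop} {n : ℕ} (hG : DependsOn G (Set.Iio n)) {σ : ℕ → ℕ}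
    (hσ : Set.InjOn σ (Set.Iio n)) :
    P {ω | G (fun i => ξ (σ i) ω)} = P {ω | G (ξ · ω)} := by
  obtain ⟨g, rfl⟩ := dependsOn_iff_exists_comp.mp hG
  have hlaw : ∀ τ : ℕ → ℕ, Set.InjOn τ (Set.Iio n) →
      P {ω | g ((Set.Iio n).domRestrict fun i => ξ (τ i) ω)} =
        Measure.pi (fun _ => P.map (ξ 0)) {v | g v} := fun τ hτ => by
    rw [← map_comp_eq_pi hindep hident hτ.injective, Measure.map_apply_of_aemeasurable
      (aemeasurable_pi_lambda _ fun i => (hident _).aemeasurable_fst) .of_discrete]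
    rfl
  exact (hlaw σ hσ).trans (hlaw id (Set.injOn_id _)).symm

lemma measure_forall_blocks_eq_prod {ξ : ℕ → Ω → α} (hindep : iIndepFun ξ P)
    (hξ : ∀ i, AEMeasurable (ξ i) P) (nn : ℕ → ℕ) {G : ℕ → (ℕ → α) → Prop}
    (hG : ∀ i, DependsOn (G i) (Set.Iio (nn i))) (k : ℕ) :
    P {ω | ∀ i < k, G i (fun j => ξ (∑ l ∈ range i, nn l + j) ω)} =
      ∏ i ∈ range k, P {ω | G i (fun j => ξ (∑ l ∈ range i, nn l + j) ω)} := by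
  have := hindep.isProbabilityMeasure
  induction k with
  | zero => simp
  | succ k ih =>
    simp only [Nat.forall_lt_succ_right, prod_range_succ, ← ih]
    refine measure_setOf_and_eq_mul hindep hξ
      (G := fun g => ∀ i < k, G i fun j => g (∑ l ∈ range i, nn l + j))
      (H := fun g => G k fun j => g (∑ l ∈ range k, nn l + j)) (s := range (∑ l ∈ range k, nn l))
      (t := Ico (∑ l ∈ range k, nn l) (∑ l ∈ range (k + 1), nn l))
      (by rw [range_eq_Ico]; exact Ico_disjoint_Ico_consecutive _ _ _) ?_ ?_
    · intro g g' h
      refine propext <| forall₂_congr fun i hi => by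
        rw [hG i fun j hj => h _ ?_]
        have := sum_le_sum_of_subset (f := nn) (range_subset_range.mpr (Nat.succ_le_of_lt hi))
        rw [sum_range_succ] at this
        simp only [coe_range, Set.mem_Iio] at hj ⊢
        omega
    · intro g g' h
      refine hG k fun j hj => h _ ?_
      simp only [coe_Ico, Set.mem_Ico, sum_range_succ, Set.mem_Iio] at hj ⊢
      omega

lemma measure_sum_eq_and_sum_eq_eq_mul [IsProbabilityMeasure P] {ξ : ℕ → Ω → ℕ × ℕ}
    (hindep : iIndepFun ξ P) (hident : ∀ i, IdentDistrib (ξ i) (ξ 0) P P) {n : ℕ} (hn : 0 < n)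
    (ℓ : ℕ) :
    P {ω | ∑ j ∈ range n, (ξ j ω).1 = n - 1 ∧ ∑ j ∈ range n, (ξ j ω).2 = ℓ} =
      n * P {ω | IsCluster n ℓ (ξ · ω)} := by
  have hξ : ∀ i, AEMeasurable (ξ i) P := fun i => (hident i).aemeasurable_fst
  have hinj : ∀ r, Set.InjOn (fun i => (i + r) % n) (Set.Iio n) := fun r i hi j hj h => by
    have := Nat.ModEq.add_right_cancel' r h
    rwa [Nat.ModEq, Nat.mod_eq_of_lt hi, Nat.mod_eq_of_lt hj] at this
  have hunion : {ω | ∑ j ∈ range n, (ξ j ω).1 = n - 1 ∧ ∑ j ∈ range n, (ξ j ω).2 = ℓ} =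
      ⋃ r ∈ range n, {ω | IsCluster n ℓ (fun i => ξ ((i + r) % n) ω)} := by
    ext ω
    simpa using sum_eq_and_sum_eq_iff_exists_isCluster_rotate (fun j => ξ j ω) hn ℓ
  rw [hunion, measure_biUnion_finset₀]
  · simp only [measure_setOf_comp_eq_of_injOn hindep hident (dependsOn_isCluster n ℓ) (hinj _),
      sum_const, card_range, nsmul_eq_mul]
  · intro r hr r' hr' hne
    refine Disjoint.aedisjoint (Set.disjoint_left.mpr fun ω h h' => hne ?_)
    exact eq_of_isCluster_rotate (g := fun j => ξ j ω) (mem_range.mp hr) (mem_range.mp hr') h h'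
  · exact fun r _ => nullMeasurableSet_setOf_of_dependsOn (fun i => hξ _) (s := range n)
      (by simpa using dependsOn_isCluster n ℓ)

end Probability

end AllelicClusters

open AllelicClusters

theorem law_of_allelic_clusters_and_mutants_general
    {Ω : Type*} [MeasureSpace Ω] (P : Measure Ω := volume) [IsProbabilityMeasure P]
    (ξ : ℕ → Ω → ℕ × ℕ)
    (hindep : iIndepFun ξ P)
    (hident : ∀ i, IdentDistrib (ξ i) (ξ 0) P P)
    (Tc : ℕ → Ω → ℕ)
    (hTc : ∀ j ω, Tc j ω = sInf {m : ℕ |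
      (∑ i ∈ Finset.range m, ((ξ i ω).1 : ℤ)) - m = -(j : ℤ)})
    (k : ℕ) (nn ll : ℕ → ℕ)
    (hnn : ∀ i < k, 1 ≤ nn i) :
    P {ω | ∀ i < k, Tc (i + 1) ω - Tc i ω = nn i ∧
        (∑ ℓ ∈ Finset.Ico (Tc i ω) (Tc (i + 1) ω), (ξ ℓ ω).2) = ll i}
      = ∏ i ∈ Finset.range k, ((nn i : ENNReal)⁻¹ *
          P {ω | (∑ j ∈ Finset.range (nn i), (ξ j ω).1) = nn i - 1
               ∧ (∑ j ∈ Finset.range (nn i), (ξ j ω).2) = ll i}) := by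
  obtain rfl : Tc = fun j ω => hitTime (fun m => (ξ m ω).1) j := funext₂ hTc
  simp only [forall_hitTime_iff_isCluster _ ll hnn]
  rw [measure_forall_blocks_eq_prod hindep (fun i => (hident i).aemeasurable_fst) nn
    (fun i => dependsOn_isCluster (nn i) (ll i)) k]
  refine prod_congr rfl fun i hi => ?_
  have hni : 0 < nn i := hnn i (mem_range.mp hi)
  rw [measure_setOf_comp_eq_of_injOn hindep hident (dependsOn_isCluster _ _)
      (add_right_injective _).injOn,
    measure_sum_eq_and_sum_eq_eq_mul hindep hident hni,
    ENNReal.inv_mul_cancel_left (Nat.cast_ne_zero.mpr hni.ne') (ENNReal.natCast_ne_top _)]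

/-- Law of the allelic tree with cluster sizes: for cluster sizes `nn 0, ..., nn (k-1) ≥ 1`
and mutant counts `ll 0, ..., ll (k-1)` with `ll 0 + ... + ll (j-1) > j - 1` for `1 ≤ j < k`
(so that the first `k` clusters all belong to the tree of a single ancestor),
`P(|C_1| = nn 0, M_1 = ll 0, ..., |C_k| = nn (k-1), M_k = ll (k-1))
  = Π_i (1 / nn i) π^{* nn i}_{nn i - 1, ll i}`. -/
theorem law_of_allelic_clusters_and_mutants
    {Ω : Type*} [MeasureSpace Ω] (P : Measure Ω := volume) [IsProbabilityMeasure P]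
    (ξ : ℕ → Ω → ℕ × ℕ) (hmeas : ∀ i, Measurable (ξ i))
    (hindep : iIndepFun ξ P)
    (hident : ∀ i, IdentDistrib (ξ i) (ξ 0) P P)
    (hint : Integrable (fun ω => (((ξ 0 ω).1 : ℝ) + ((ξ 0 ω).2 : ℝ))) P)
    (hmean : (∫ ω, (((ξ 0 ω).1 : ℝ) + ((ξ 0 ω).2 : ℝ)) ∂P) ≤ 1)
    (Tc : ℕ → Ω → ℕ)
    (hTc : ∀ j ω, Tc j ω = sInf {m : ℕ |
      (∑ i ∈ Finset.range m, ((ξ i ω).1 : ℤ)) - m = -(j : ℤ)})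
    (k : ℕ) (hk : 1 ≤ k) (nn ll : ℕ → ℕ)
    (hnn : ∀ i < k, 1 ≤ nn i)
    (hll : ∀ j, 1 ≤ j → j < k → (j : ℤ) - 1 < ∑ i ∈ Finset.range j, (ll i : ℤ)) :
    P {ω | ∀ i < k, Tc (i + 1) ω - Tc i ω = nn i ∧
        (∑ ℓ ∈ Finset.Ico (Tc i ω) (Tc (i + 1) ω), (ξ ℓ ω).2) = ll i}
      = ∏ i ∈ Finset.range k, ((nn i : ENNReal)⁻¹ *
          P {ω | (∑ j ∈ Finset.range (nn i), (ξ j ω).1) = nn i - 1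
               ∧ (∑ j ∈ Finset.range (nn i), (ξ j ω).2) = ll i}) :=
  law_of_allelic_clusters_and_mutants_general P ξ hindep hident Tc hTc k nn ll hnn
end

section
/- Let ξ be a ℤ_+-valued random variable, not a.s. constant, with E(ξ θ_0^ξ) < ∞ for some θ_0 > 1, E(ξ) < 1, and such that the function θ ↦ E(ξ θ^ξ)/E(θ^ξ) attains the value 1 on (1, θ_0]. Then there exists a unique θ > 1 with E(ξ θ^ξ) = E(θ^ξ). -/
set_option autoImplicit false

open MeasureTheory ProbabilityTheory Filter

/-!
Put `f_θ(n) = (n - 1) θ^n`, so that `θ` is a tilting parameter iff `E f_θ(ξ) = 0`. For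
`0 < θ₁ < θ₂` and `r = θ₂ / θ₁` one has `f_θ₂(n) - r f_θ₁(n) = (n - 1) (r^n - r) θ₁^n`, which is
nonnegative and vanishes only at `n = 1`. Two distinct tilting parameters would make the
expectation of this function zero, forcing `ξ = 1` almost surely.
-/

lemma natCast_sub_one_mul_pow_sub_pos {n : ℕ} (hn : n ≠ 1) {r : ℝ} (hr : 1 < r) :
    0 < ((n : ℝ) - 1) * (r ^ n - r) := by
  rcases Nat.lt_or_gt_of_ne hn with hn0 | hn2
  · obtain rfl : n = 0 := by omega
    simpa using hr
  · have hrn : r < r ^ n := by simpa using pow_lt_pow_right₀ hr hn2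
    have hn1 : (1 : ℝ) < n := by exact_mod_cast hn2
    exact mul_pos (sub_pos.mpr hn1) (sub_pos.mpr hrn)

section Integrability

variable {Ω : Type*} [MeasurableSpace Ω] {P : Measure Ω} {ξ : Ω → ℕ} {θ : ℝ}

lemma integrable_pow_of_integrable_natCast_mul_pow [IsFiniteMeasure P] (hξ : Measurable ξ)
    (hθ : 0 ≤ θ) (h : Integrable (fun ω => (ξ ω : ℝ) * θ ^ ξ ω) P) :
    Integrable (fun ω => θ ^ ξ ω) P := by
  refine ((integrable_const 1).add h).mono
    ((measurable_from_nat (f := fun n => θ ^ n)).comp hξ).aestronglyMeasurable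
    (ae_of_all _ fun ω => ?_)
  have hpow : 0 ≤ θ ^ ξ ω := pow_nonneg hθ _
  have hmul : 0 ≤ (ξ ω : ℝ) * θ ^ ξ ω := mul_nonneg (Nat.cast_nonneg _) hpow
  rw [Pi.add_apply, Real.norm_of_nonneg hpow, Real.norm_of_nonneg (by linarith)]
  -- `θ^n ≤ n θ^n` unless `n = 0`, where `θ^n = 1`
  rcases Nat.eq_zero_or_pos (ξ ω) with h0 | hpos
  · simp [h0]
  · have : (1 : ℝ) ≤ ξ ω := by exact_mod_cast hpos
    nlinarith

lemma integrable_natCast_mul_pow_of_le (hξ : Measurable ξ) {θ' : ℝ} (hθ : 0 ≤ θ)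
    (hle : θ ≤ θ') (h : Integrable (fun ω => (ξ ω : ℝ) * θ' ^ ξ ω) P) :
    Integrable (fun ω => (ξ ω : ℝ) * θ ^ ξ ω) P := by
  refine h.mono
    ((measurable_from_nat (f := fun n => (n : ℝ) * θ ^ n)).comp hξ).aestronglyMeasurable
    (ae_of_all _ fun ω => ?_)
  have hθ' : 0 ≤ θ' := hθ.trans hle
  rw [Real.norm_of_nonneg (by positivity), Real.norm_of_nonneg (by positivity)]
  exact mul_le_mul_of_nonneg_left (pow_le_pow_left₀ hθ hle _) (Nat.cast_nonneg _)

variable [IsFiniteMeasure P]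

lemma integrable_natCast_sub_one_mul_pow (hξ : Measurable ξ) (hθ : 0 ≤ θ)
    (h : Integrable (fun ω => (ξ ω : ℝ) * θ ^ ξ ω) P) :
    Integrable (fun ω => ((ξ ω : ℝ) - 1) * θ ^ ξ ω) P := by
  simp only [sub_one_mul]
  exact h.sub (integrable_pow_of_integrable_natCast_mul_pow hξ hθ h)

lemma integral_natCast_sub_one_mul_pow_eq_zero (hξ : Measurable ξ) (hθ : 0 ≤ θ)
    (h : Integrable (fun ω => (ξ ω : ℝ) * θ ^ ξ ω) P)
    (heq : ∫ ω, (ξ ω : ℝ) * θ ^ ξ ω ∂P = ∫ ω, θ ^ ξ ω ∂P) :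
    ∫ ω, ((ξ ω : ℝ) - 1) * θ ^ ξ ω ∂P = 0 := by
  simp only [sub_one_mul]
  rw [integral_sub h (integrable_pow_of_integrable_natCast_mul_pow hξ hθ h), heq, sub_self]

end Integrability

theorem ae_eq_one_of_tilting_parameters {Ω : Type*} [MeasurableSpace Ω] {P : Measure Ω}
    [IsFiniteMeasure P] {ξ : Ω → ℕ} (hξ : Measurable ξ) {θ₁ θ₂ : ℝ} (hθ₁ : 0 < θ₁)
    (h12 : θ₁ < θ₂)
    (hint₁ : Integrable (fun ω => (ξ ω : ℝ) * θ₁ ^ ξ ω) P)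
    (hint₂ : Integrable (fun ω => (ξ ω : ℝ) * θ₂ ^ ξ ω) P)
    (heq₁ : ∫ ω, (ξ ω : ℝ) * θ₁ ^ ξ ω ∂P = ∫ ω, θ₁ ^ ξ ω ∂P)
    (heq₂ : ∫ ω, (ξ ω : ℝ) * θ₂ ^ ξ ω ∂P = ∫ ω, θ₂ ^ ξ ω ∂P) :
    ∀ᵐ ω ∂P, ξ ω = 1 := by
  set r := θ₂ / θ₁
  have hr : 1 < r := (one_lt_div hθ₁).mpr h12
  have hθ₂ : θ₂ = r * θ₁ := (div_mul_cancel₀ θ₂ hθ₁.ne').symm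
  set g : Ω → ℝ := fun ω => ((ξ ω : ℝ) - 1) * (r ^ ξ ω - r) * θ₁ ^ ξ ω
  have hg : g = fun ω => ((ξ ω : ℝ) - 1) * θ₂ ^ ξ ω - r * (((ξ ω : ℝ) - 1) * θ₁ ^ ξ ω) := by
    ext ω; simp only [g, hθ₂, mul_pow]; ring
  have hg_nonneg : ∀ ω, 0 ≤ g ω := fun ω => by
    rcases eq_or_ne (ξ ω) 1 with h1 | h1
    · simp [g, h1]
    · exact mul_nonneg (natCast_sub_one_mul_pow_sub_pos h1 hr).le (pow_nonneg hθ₁.le _)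
  have hf₁ := integrable_natCast_sub_one_mul_pow hξ hθ₁.le hint₁
  have hf₂ := integrable_natCast_sub_one_mul_pow hξ (hθ₁.trans h12).le hint₂
  have hg_int : Integrable g P := hg ▸ hf₂.sub (hf₁.const_mul r)
  have hg_zero : ∫ ω, g ω ∂P = 0 := by
    rw [hg, integral_sub hf₂ (hf₁.const_mul r), integral_const_mul,
      integral_natCast_sub_one_mul_pow_eq_zero hξ (hθ₁.trans h12).le hint₂ heq₂,
      integral_natCast_sub_one_mul_pow_eq_zero hξ hθ₁.le hint₁ heq₁, mul_zero, sub_zero]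
  filter_upwards [(integral_eq_zero_iff_of_nonneg hg_nonneg hg_int).mp hg_zero] with ω hω
  by_contra h1
  exact (mul_pos (natCast_sub_one_mul_pow_sub_pos h1 hr) (pow_pos hθ₁ _)).ne' hω

theorem tilting_parameter_unique_general
    {Ω : Type*} [MeasureSpace Ω] (P : Measure Ω := volume) [IsProbabilityMeasure P]
    (ξ : Ω → ℕ) (hmeas : Measurable ξ)
    (hnotconst : ¬ ∃ c : ℕ, ∀ᵐ ω ∂P, ξ ω = c)
    (θ₀ : ℝ)
    (hint₀ : Integrable (fun ω => (ξ ω : ℝ) * θ₀ ^ ξ ω) P)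
    (hattain : ∃ θ ∈ Set.Ioc (1 : ℝ) θ₀,
      (∫ ω, (ξ ω : ℝ) * θ ^ ξ ω ∂P) = ∫ ω, θ ^ ξ ω ∂P) :
    ∃! θ : ℝ, 1 < θ ∧ Integrable (fun ω => (ξ ω : ℝ) * θ ^ ξ ω) P ∧
      (∫ ω, (ξ ω : ℝ) * θ ^ ξ ω ∂P) = ∫ ω, θ ^ ξ ω ∂P := by
  obtain ⟨θ, ⟨hθ, hθθ₀⟩, heq⟩ := hattain
  have hint := integrable_natCast_mul_pow_of_le hmeas (zero_le_one.trans hθ.le) hθθ₀ hint₀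
  refine ⟨θ, ⟨hθ, hint, heq⟩, fun θ' ⟨hθ', hint', heq'⟩ => ?_⟩
  by_contra hne
  apply hnotconst ⟨1, ?_⟩
  rcases lt_or_gt_of_ne hne with h | h
  · exact ae_eq_one_of_tilting_parameters hmeas (zero_lt_one.trans hθ') h hint' hint heq' heq
  · exact ae_eq_one_of_tilting_parameters hmeas (zero_lt_one.trans hθ) h hint hint' heq heq'

/-- Uniqueness of the exponential tilting parameter: if `ξ` is a non-degenerate
`ℕ`-valued random variable with `E(ξ θ₀^ξ) < ∞` for some `θ₀ > 1`, `E(ξ) < 1`, and the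
equation `E(ξ θ^ξ) = E(θ^ξ)` has a solution in `(1, θ₀]`, then there is a unique `θ > 1`
(with `ξ θ^ξ` integrable) satisfying `E(ξ θ^ξ) = E(θ^ξ)`. -/
theorem tilting_parameter_unique
    {Ω : Type*} [MeasureSpace Ω] (P : Measure Ω := volume) [IsProbabilityMeasure P]
    (ξ : Ω → ℕ) (hmeas : Measurable ξ)
    (hnotconst : ¬ ∃ c : ℕ, ∀ᵐ ω ∂P, ξ ω = c)
    (θ₀ : ℝ) (hθ₀ : 1 < θ₀)
    (hint₀ : Integrable (fun ω => (ξ ω : ℝ) * θ₀ ^ ξ ω) P)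
    (hintξ : Integrable (fun ω => (ξ ω : ℝ)) P)
    (hmean : (∫ ω, (ξ ω : ℝ) ∂P) < 1)
    (hattain : ∃ θ ∈ Set.Ioc (1 : ℝ) θ₀,
      (∫ ω, (ξ ω : ℝ) * θ ^ ξ ω ∂P) = ∫ ω, θ ^ ξ ω ∂P) :
    ∃! θ : ℝ, 1 < θ ∧ Integrable (fun ω => (ξ ω : ℝ) * θ ^ ξ ω) P ∧
      (∫ ω, (ξ ω : ℝ) * θ ^ ξ ω ∂P) = ∫ ω, θ ^ ξ ω ∂P :=
  tilting_parameter_unique_general P ξ hmeas hnotconst θ₀ hint₀ hattain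
end
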